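/- arXiv:0801.4067 — 5 statements merged into one kernel-verified Lean document; each statement's English description precedes it below -/
import Mathlib

section
/- Let A be a weak bialgebra over a commutative ring k, and let C = t(A) be the image of the target map t(a) = ε(1₍₁₎ a)1₍₂₎. Then C, equipped with multiplication μ_C(x,y) = t(x)t(y) (= xy restricted to C), unit η, comultiplication δ_C(x) = (t⊗t)δ(x), and counit ε, is a separable Frobenius monoid: it is both an associative unital algebra and a coassociative counital coalgebra satisfying the Frobenius compatibility (μ_C⊗1)(1⊗δ_C) = δ_C∘μ_C = (1⊗μ_C)(δ_C⊗1) and the separability condition μ_C∘δ_C = id_C. -/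
open TensorProduct

noncomputable section

variable {k : Type*} [CommRing k] {A : Type*} [Ring A] [Algebra k A]

/-- Given `x z : A`, the linear functional on `A ⊗ A` sending `y₁ ⊗ y₂` to
`ε(x·y₁)·ε(y₂·z)` (used to state the weakened counit axiom in Sweedler form). -/
def sweedlerCounit (ε : A →ₗ[k] k) (x z : A) : A ⊗[k] A →ₗ[k] k :=
  LinearMap.mul' k k ∘ₗ TensorProduct.map
    (ε ∘ₗ LinearMap.mul' k A ∘ₗ TensorProduct.mk k A A x)
    (ε ∘ₗ LinearMap.mul' k A ∘ₗ (TensorProduct.mk k A A).flip z)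

/-- A weak bialgebra structure on the `k`-algebra `A`: a coassociative counital
coalgebra `(δ, ε)` such that `δ` is multiplicative, together with the weakened
unit axiom and the weakened counit axiom. -/
structure IsWeakBialgebra (δ : A →ₗ[k] A ⊗[k] A) (ε : A →ₗ[k] k) : Prop where
  coassoc : (TensorProduct.assoc k A A A).toLinearMap ∘ₗ
      TensorProduct.map δ LinearMap.id ∘ₗ δ = TensorProduct.map LinearMap.id δ ∘ₗ δ
  counit_left : (TensorProduct.lid k A).toLinearMap ∘ₗ
      TensorProduct.map ε LinearMap.id ∘ₗ δ = LinearMap.id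
  counit_right : (TensorProduct.rid k A).toLinearMap ∘ₗ
      TensorProduct.map LinearMap.id ε ∘ₗ δ = LinearMap.id
  mul_compat : ∀ x y : A, δ (x * y) = δ x * δ y
  weak_unit₁ : TensorProduct.map δ LinearMap.id (δ 1) =
      (δ 1 ⊗ₜ[k] (1 : A)) * ((TensorProduct.assoc k A A A).symm ((1 : A) ⊗ₜ[k] δ 1))
  weak_unit₂ : TensorProduct.map δ LinearMap.id (δ 1) =
      ((TensorProduct.assoc k A A A).symm ((1 : A) ⊗ₜ[k] δ 1)) * (δ 1 ⊗ₜ[k] (1 : A))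
  weak_counit₁ : ∀ x y z : A, ε (x * y * z) = sweedlerCounit ε x z (δ y)
  weak_counit₂ : ∀ x y z : A, ε (x * y * z) =
      sweedlerCounit ε x z (TensorProduct.comm k A A (δ y))

/-- The target map `t(a) = ε(1₍₁₎ a) 1₍₂₎ = (ε ⊗ 1)(δ(1)·(a ⊗ 1))`. -/
def targetMap (δ : A →ₗ[k] A ⊗[k] A) (ε : A →ₗ[k] k) : A →ₗ[k] A :=
  (TensorProduct.lid k A).toLinearMap ∘ₗ TensorProduct.map ε LinearMap.id ∘ₗ
    LinearMap.mulLeft k (δ 1) ∘ₗ (TensorProduct.mk k A A).flip 1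

/-- The source map `s(a) = 1₍₁₎ ε(a 1₍₂₎) = (1 ⊗ ε)((1 ⊗ a)·δ(1))`. -/
def sourceMap (δ : A →ₗ[k] A ⊗[k] A) (ε : A →ₗ[k] k) : A →ₗ[k] A :=
  (TensorProduct.rid k A).toLinearMap ∘ₗ TensorProduct.map LinearMap.id ε ∘ₗ
    LinearMap.mulRight k (δ 1) ∘ₗ TensorProduct.mk k A A 1

/-- The map `r(a) = 1₍₁₎ ε(1₍₂₎ a) = (1 ⊗ ε)(δ(1)·(1 ⊗ a))` (the "usual" source map). -/
def rMap (δ : A →ₗ[k] A ⊗[k] A) (ε : A →ₗ[k] k) : A →ₗ[k] A :=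
  (TensorProduct.rid k A).toLinearMap ∘ₗ TensorProduct.map LinearMap.id ε ∘ₗ
    LinearMap.mulLeft k (δ 1) ∘ₗ TensorProduct.mk k A A 1

/-- The comultiplication `δ_C = (t ⊗ t) ∘ δ` of the target subalgebra `C = t(A)`. -/
def coprodC (δ : A →ₗ[k] A ⊗[k] A) (ε : A →ₗ[k] k) : A →ₗ[k] A ⊗[k] A :=
  TensorProduct.map (targetMap δ ε) (targetMap δ ε) ∘ₗ δ

namespace WBAux

variable (δ : A →ₗ[k] A ⊗[k] A) (ε : A →ₗ[k] k)

lemma sweedler_tmul (x z u v : A) :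
    sweedlerCounit ε x z (u ⊗ₜ[k] v) = ε (x * u) * ε (v * z) := by
  simp [sweedlerCounit]

section

variable (h : IsWeakBialgebra δ ε) (S : Finset (A × A))
  (hS : δ 1 = ∑ p ∈ S, p.1 ⊗ₜ[k] p.2)

include hS

lemma t_apply (a : A) :
    targetMap δ ε a = ∑ p ∈ S, ε (p.1 * a) • p.2 := by
  simp only [targetMap, LinearMap.comp_apply, LinearMap.flip_apply, mk_apply,
    LinearMap.mulLeft_apply, hS, Finset.sum_mul, Algebra.TensorProduct.tmul_mul_tmul,
    mul_one, map_sum, map_tmul, LinearEquiv.coe_coe, lid_tmul, LinearMap.id_coe, id_eq]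

include h

lemma wc1_one (x z : A) :
    ∑ p ∈ S, ε (x * p.1) * ε (p.2 * z) = ε (x * z) := by
  have := h.weak_counit₁ x 1 z
  rw [mul_one, hS, map_sum] at this
  simp only [sweedler_tmul] at this
  exact this.symm

lemma eps_abs (c b : A) : ε (c * targetMap δ ε b) = ε (c * b) := by
  have h2 := h.weak_counit₂ c 1 b
  rw [mul_one, hS] at h2
  simp only [map_sum, comm_tmul, sweedler_tmul] at h2
  rw [t_apply δ ε S hS, Finset.mul_sum]
  simp only [map_sum, mul_smul_comm, map_smul, smul_eq_mul]
  rw [h2]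
  exact Finset.sum_congr rfl fun p _ => mul_comm _ _

lemma t_one : targetMap δ ε 1 = 1 := by
  have h0 := congrArg (fun f => f 1) h.counit_left
  simp only [LinearMap.comp_apply, LinearMap.id_coe, id_eq, LinearEquiv.coe_coe,
    hS, map_sum, map_tmul, lid_tmul] at h0
  rw [t_apply δ ε S hS]
  simpa [mul_one] using h0

lemma eps_t (a : A) : ε (targetMap δ ε a) = ε a := by
  have := eps_abs δ ε h S hS 1 a
  simpa using this

lemma t_t (a : A) : targetMap δ ε (targetMap δ ε a) = targetMap δ ε a :=
  calc targetMap δ ε (targetMap δ ε a)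
      = ∑ p ∈ S, ε (p.1 * targetMap δ ε a) • p.2 := t_apply δ ε S hS _
    _ = ∑ p ∈ S, ε (p.1 * a) • p.2 :=
        Finset.sum_congr rfl fun p _ => by rw [eps_abs δ ε h S hS]
    _ = targetMap δ ε a := (t_apply δ ε S hS a).symm

lemma ttr (a b : A) :
    targetMap δ ε (a * targetMap δ ε b) = targetMap δ ε (a * b) :=
  calc targetMap δ ε (a * targetMap δ ε b)
      = ∑ p ∈ S, ε (p.1 * (a * targetMap δ ε b)) • p.2 := t_apply δ ε S hS _
    _ = ∑ p ∈ S, ε (p.1 * (a * b)) • p.2 := Finset.sum_congr rfl fun p _ => by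
        rw [← mul_assoc, eps_abs δ ε h S hS, mul_assoc]
    _ = targetMap δ ε (a * b) := (t_apply δ ε S hS _).symm

omit hS in
lemma d1_sq : δ 1 * δ 1 = δ 1 := by
  have := h.mul_compat 1 1
  rw [mul_one] at this
  exact this.symm


lemma K1 : TensorProduct.map LinearMap.id δ (δ 1) =
    ∑ p ∈ S, ∑ q ∈ S, p.1 ⊗ₜ[k] ((p.2 * q.1) ⊗ₜ[k] q.2) := by
  have hc := congrArg (fun f => f 1) h.coassoc
  simp only [LinearMap.comp_apply, LinearEquiv.coe_coe] at hc
  rw [← hc, h.weak_unit₁, hS, sum_tmul, tmul_sum, map_sum, Finset.sum_mul_sum]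
  simp only [assoc_symm_tmul, Algebra.TensorProduct.tmul_mul_tmul, one_mul, mul_one,
    map_sum, assoc_tmul]

lemma K2 : TensorProduct.map LinearMap.id δ (δ 1) =
    ∑ p ∈ S, ∑ q ∈ S, p.1 ⊗ₜ[k] ((q.1 * p.2) ⊗ₜ[k] q.2) := by
  have hc := congrArg (fun f => f 1) h.coassoc
  simp only [LinearMap.comp_apply, LinearEquiv.coe_coe] at hc
  rw [← hc, h.weak_unit₂, hS, sum_tmul, tmul_sum, map_sum, Finset.sum_mul_sum]
  simp only [assoc_symm_tmul, Algebra.TensorProduct.tmul_mul_tmul, one_mul, mul_one,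
    map_sum, assoc_tmul]
  rw [Finset.sum_comm]

lemma L1 : ∑ p ∈ S, p.1 ⊗ₜ[k] targetMap δ ε p.2 = δ 1 := by
  have h1 := congrArg (TensorProduct.map LinearMap.id
    ((TensorProduct.lid k A).toLinearMap ∘ₗ TensorProduct.map ε LinearMap.id))
    (K2 δ ε h S hS)
  rw [← LinearMap.comp_apply, ← TensorProduct.map_comp] at h1
  rw [LinearMap.comp_assoc, h.counit_left] at h1
  simp only [LinearMap.id_comp, LinearMap.comp_id, TensorProduct.map_id,
    LinearMap.id_coe, id_eq, map_sum, map_tmul, LinearMap.comp_apply,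
    LinearEquiv.coe_coe, lid_tmul] at h1
  calc ∑ p ∈ S, p.1 ⊗ₜ[k] targetMap δ ε p.2
      = ∑ p ∈ S, ∑ q ∈ S, p.1 ⊗ₜ[k] (ε (q.1 * p.2) • q.2) := by
        refine Finset.sum_congr rfl fun p _ => ?_
        rw [t_apply δ ε S hS, tmul_sum]
    _ = δ 1 := h1.symm

lemma deltaT (a : A) :
    δ (targetMap δ ε a) = δ 1 * (targetMap δ ε a ⊗ₜ[k] 1) := by
  have h1 := congrArg ((TensorProduct.lid k (A ⊗[k] A)).toLinearMap ∘ₗ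
    TensorProduct.map (ε ∘ₗ LinearMap.mulRight k a) LinearMap.id)
    (K2 δ ε h S hS)
  nth_rewrite 1 [hS] at h1
  simp only [map_sum, LinearMap.comp_apply, map_tmul, LinearMap.mulRight_apply,
    LinearMap.id_coe, id_eq, LinearEquiv.coe_coe, lid_tmul] at h1
  calc δ (targetMap δ ε a) = ∑ p ∈ S, ε (p.1 * a) • δ p.2 := by
        rw [t_apply δ ε S hS, map_sum]; simp only [map_smul]
    _ = ∑ p ∈ S, ∑ q ∈ S, ε (p.1 * a) • ((q.1 * p.2) ⊗ₜ[k] q.2) := h1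
    _ = δ 1 * (targetMap δ ε a ⊗ₜ[k] 1) := by
        rw [t_apply δ ε S hS, hS, Finset.sum_mul, Finset.sum_comm]
        refine Finset.sum_congr rfl fun q _ => ?_
        rw [sum_tmul, Finset.mul_sum]
        refine Finset.sum_congr rfl fun p _ => ?_
        simp [smul_tmul', mul_smul_comm, Algebra.TensorProduct.tmul_mul_tmul]

lemma deltaT' (a : A) :
    δ (targetMap δ ε a) = (targetMap δ ε a ⊗ₜ[k] 1) * δ 1 := by
  have h1 := congrArg ((TensorProduct.lid k (A ⊗[k] A)).toLinearMap ∘ₗ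
    TensorProduct.map (ε ∘ₗ LinearMap.mulRight k a) LinearMap.id)
    (K1 δ ε h S hS)
  nth_rewrite 1 [hS] at h1
  simp only [map_sum, LinearMap.comp_apply, map_tmul, LinearMap.mulRight_apply,
    LinearMap.id_coe, id_eq, LinearEquiv.coe_coe, lid_tmul] at h1
  calc δ (targetMap δ ε a) = ∑ p ∈ S, ε (p.1 * a) • δ p.2 := by
        rw [t_apply δ ε S hS, map_sum]; simp only [map_smul]
    _ = ∑ p ∈ S, ∑ q ∈ S, ε (p.1 * a) • ((p.2 * q.1) ⊗ₜ[k] q.2) := h1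
    _ = (targetMap δ ε a ⊗ₜ[k] 1) * δ 1 := by
        rw [t_apply δ ε S hS, hS, Finset.mul_sum, Finset.sum_comm]
        refine Finset.sum_congr rfl fun q _ => ?_
        rw [sum_tmul, Finset.sum_mul]
        refine Finset.sum_congr rfl fun p _ => ?_
        simp [smul_tmul', smul_mul_assoc, Algebra.TensorProduct.tmul_mul_tmul]

lemma delta_fix {x : A} (hx : targetMap δ ε x = x) :
    δ x = δ 1 * (x ⊗ₜ[k] 1) := by
  conv_lhs => rw [← hx]
  rw [deltaT δ ε h S hS, hx]

lemma delta_fix' {x : A} (hx : targetMap δ ε x = x) :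
    δ x = (x ⊗ₜ[k] 1) * δ 1 := by
  conv_lhs => rw [← hx]
  rw [deltaT' δ ε h S hS, hx]

lemma comm_d1 {x : A} (hx : targetMap δ ε x = x) :
    δ 1 * (x ⊗ₜ[k] 1) = (x ⊗ₜ[k] 1) * δ 1 := by
  rw [← delta_fix δ ε h S hS hx, delta_fix' δ ε h S hS hx]


lemma K1' : TensorProduct.map LinearMap.id δ (δ 1) =
    ∑ p ∈ S, p.1 ⊗ₜ[k] ((p.2 ⊗ₜ[k] 1) * δ 1) := by
  rw [K1 δ ε h S hS]
  refine Finset.sum_congr rfl fun p _ => ?_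
  rw [hS, Finset.mul_sum, tmul_sum]
  exact Finset.sum_congr rfl fun q _ => by
    rw [Algebra.TensorProduct.tmul_mul_tmul, one_mul]

omit h in
lemma map_delta_exp : TensorProduct.map LinearMap.id δ (δ 1) =
    ∑ p ∈ S, p.1 ⊗ₜ[k] δ p.2 := by
  rw [hS, map_sum]
  exact Finset.sum_congr rfl fun p _ => by
    rw [map_tmul, LinearMap.id_coe, id_eq]

omit hS in
lemma counit_pt (w : A) :
    (TensorProduct.lid k A) (TensorProduct.map ε LinearMap.id (δ w)) = w := by
  have := congrArg (fun f => f w) h.counit_left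
  simpa using this

lemma pistar' (z : A) :
    ∑ p ∈ S, p.1 ⊗ₜ[k] (p.2 * targetMap δ ε z) =
      ∑ p ∈ S, ∑ q ∈ S, ε (p.2 * q.1 * z) • (p.1 ⊗ₜ[k] q.2) := by
  have h1 := congrArg (TensorProduct.map LinearMap.id
      ((TensorProduct.lid k A).toLinearMap ∘ₗ TensorProduct.map ε LinearMap.id ∘ₗ
        LinearMap.mulRight k (δ 1 * (targetMap δ ε z ⊗ₜ[k] 1))))
    ((map_delta_exp δ S hS).symm.trans (K1' δ ε h S hS))
  simp only [map_sum, map_tmul, LinearMap.id_coe, id_eq, LinearMap.comp_apply,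
    LinearMap.mulRight_apply, LinearEquiv.coe_coe] at h1
  calc ∑ p ∈ S, p.1 ⊗ₜ[k] (p.2 * targetMap δ ε z)
      = ∑ p ∈ S, p.1 ⊗ₜ[k] (TensorProduct.lid k A) (TensorProduct.map ε LinearMap.id
          (δ p.2 * (δ 1 * (targetMap δ ε z ⊗ₜ[k] 1)))) := by
        refine Finset.sum_congr rfl fun p _ => ?_
        rw [← deltaT δ ε h S hS, ← h.mul_compat, counit_pt δ ε h]
    _ = ∑ p ∈ S, p.1 ⊗ₜ[k] (TensorProduct.lid k A) (TensorProduct.map ε LinearMap.id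
          ((p.2 ⊗ₜ[k] 1) * δ 1 * (δ 1 * (targetMap δ ε z ⊗ₜ[k] 1)))) := h1
    _ = ∑ p ∈ S, ∑ q ∈ S, ε (p.2 * q.1 * z) • (p.1 ⊗ₜ[k] q.2) := by
        refine Finset.sum_congr rfl fun p _ => ?_
        rw [mul_assoc, ← mul_assoc (δ 1), d1_sq δ ε h, ← mul_assoc]
        conv_lhs => rw [hS]
        rw [Finset.mul_sum, Finset.sum_mul, map_sum, map_sum, tmul_sum]
        refine Finset.sum_congr rfl fun q _ => ?_
        rw [Algebra.TensorProduct.tmul_mul_tmul, Algebra.TensorProduct.tmul_mul_tmul,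
          one_mul, mul_one, map_tmul, LinearMap.id_coe, id_eq, lid_tmul,
          eps_abs δ ε h S hS, tmul_smul]


omit h hS in
lemma t_apply' (x : A) : targetMap δ ε x =
    (TensorProduct.lid k A) (TensorProduct.map ε LinearMap.id (δ 1 * (x ⊗ₜ[k] 1))) := by
  simp [targetMap]

lemma tmul_t (a b : A) :
    targetMap δ ε a * targetMap δ ε b = targetMap δ ε (targetMap δ ε a * b) := by
  have hL := congrArg ((TensorProduct.lid k A).toLinearMap ∘ₗ
      TensorProduct.map (ε ∘ₗ LinearMap.mulRight k a) LinearMap.id)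
    (pistar' δ ε h S hS b)
  simp only [map_sum, map_smul, map_tmul, LinearMap.comp_apply, LinearMap.mulRight_apply,
    LinearMap.id_coe, id_eq, LinearEquiv.coe_coe, lid_tmul] at hL
  have e1 : targetMap δ ε a * targetMap δ ε b =
      ∑ p ∈ S, ε (p.1 * a) • (p.2 * targetMap δ ε b) := by
    rw [t_apply δ ε S hS a, Finset.sum_mul]
    exact Finset.sum_congr rfl fun p _ => smul_mul_assoc _ _ _
  have e3 : δ 1 * ((targetMap δ ε a * b) ⊗ₜ[k] (1:A)) =
      ∑ q ∈ S, (targetMap δ ε a * (q.1 * b)) ⊗ₜ[k] q.2 := by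
    have e4 : ((targetMap δ ε a * b) ⊗ₜ[k] (1:A)) =
        (targetMap δ ε a ⊗ₜ[k] (1:A)) * (b ⊗ₜ[k] (1:A)) := by
      rw [Algebra.TensorProduct.tmul_mul_tmul, mul_one]
    rw [e4, ← mul_assoc, comm_d1 δ ε h S hS (t_t δ ε h S hS a)]
    conv_lhs => rw [hS]
    rw [Finset.mul_sum, Finset.sum_mul]
    refine Finset.sum_congr rfl fun q _ => ?_
    rw [Algebra.TensorProduct.tmul_mul_tmul, Algebra.TensorProduct.tmul_mul_tmul,
      one_mul, mul_one, mul_assoc]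
  have e2 : targetMap δ ε (targetMap δ ε a * b) =
      ∑ q ∈ S, ε (targetMap δ ε a * (q.1 * b)) • q.2 := by
    rw [t_apply' δ ε _, e3, map_sum, map_sum]
    exact Finset.sum_congr rfl fun q _ => by
      rw [map_tmul, LinearMap.id_coe, id_eq, lid_tmul]
  rw [e1, hL, e2, Finset.sum_comm]
  refine Finset.sum_congr rfl fun q _ => ?_
  rw [t_apply δ ε S hS a, Finset.sum_mul, map_sum, Finset.sum_smul]
  refine Finset.sum_congr rfl fun p _ => ?_
  rw [smul_mul_assoc, map_smul, smul_eq_mul, smul_smul,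
    mul_comm (ε (p.2 * q.1 * b)), mul_assoc p.2 q.1 b]

lemma t_absorb {x : A} (hx : targetMap δ ε x = x) (w : A) :
    targetMap δ ε (x * w) = x * targetMap δ ε w := by
  conv_lhs => rw [← hx]
  rw [← tmul_t δ ε h S hS, hx]

lemma closure {x y : A} (hx : targetMap δ ε x = x) (hy : targetMap δ ε y = y) :
    targetMap δ ε (x * y) = x * y := by
  rw [t_absorb δ ε h S hS hx, hy]


omit h in
lemma qel_exp' : TensorProduct.map (targetMap δ ε) (targetMap δ ε) (δ 1) =
    ∑ q ∈ S, targetMap δ ε q.1 ⊗ₜ[k] targetMap δ ε q.2 := by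
  rw [hS, map_sum]
  exact Finset.sum_congr rfl fun q _ => by rw [map_tmul]

lemma qel_exp : TensorProduct.map (targetMap δ ε) (targetMap δ ε) (δ 1) =
    ∑ q ∈ S, targetMap δ ε q.1 ⊗ₜ[k] q.2 := by
  have h1 := congrArg (TensorProduct.map (targetMap δ ε) LinearMap.id) (L1 δ ε h S hS)
  rw [map_sum] at h1
  simp only [map_tmul, LinearMap.id_coe, id_eq] at h1
  rw [qel_exp' δ ε S hS, h1, hS, map_sum]
  exact Finset.sum_congr rfl fun q _ => by rw [map_tmul, LinearMap.id_coe, id_eq]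

lemma dcf {x : A} (hx : targetMap δ ε x = x) :
    coprodC δ ε x = ∑ p ∈ S, targetMap δ ε (p.1 * x) ⊗ₜ[k] p.2 := by
  have h1 := congrArg (TensorProduct.map
      (targetMap δ ε ∘ₗ LinearMap.mulRight k x) LinearMap.id) (L1 δ ε h S hS)
  rw [map_sum] at h1
  conv_rhs at h1 => rw [hS, map_sum]
  simp only [map_tmul, LinearMap.comp_apply, LinearMap.mulRight_apply,
    LinearMap.id_coe, id_eq] at h1
  rw [coprodC, LinearMap.comp_apply, delta_fix δ ε h S hS hx]
  conv_lhs => rw [hS]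
  rw [Finset.sum_mul, map_sum]
  calc ∑ p ∈ S, (TensorProduct.map (targetMap δ ε) (targetMap δ ε))
        ((p.1 ⊗ₜ[k] p.2) * (x ⊗ₜ[k] 1))
      = ∑ p ∈ S, targetMap δ ε (p.1 * x) ⊗ₜ[k] targetMap δ ε p.2 := by
        refine Finset.sum_congr rfl fun p _ => ?_
        rw [Algebra.TensorProduct.tmul_mul_tmul, mul_one, map_tmul]
    _ = ∑ p ∈ S, targetMap δ ε (p.1 * x) ⊗ₜ[k] p.2 := h1

lemma form1 {z : A} (hz : targetMap δ ε z = z) :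
    coprodC δ ε z =
      (z ⊗ₜ[k] (1:A)) * TensorProduct.map (targetMap δ ε) (targetMap δ ε) (δ 1) := by
  rw [coprodC, LinearMap.comp_apply, delta_fix' δ ε h S hS hz]
  conv_lhs => rw [hS]
  rw [Finset.mul_sum, map_sum, qel_exp' δ ε S hS, Finset.mul_sum]
  refine Finset.sum_congr rfl fun p _ => ?_
  rw [Algebra.TensorProduct.tmul_mul_tmul, one_mul, map_tmul,
    Algebra.TensorProduct.tmul_mul_tmul, one_mul, t_absorb δ ε h S hS hz]

lemma form2 {z : A} (hz : targetMap δ ε z = z) :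
    coprodC δ ε z =
      TensorProduct.map (targetMap δ ε) (targetMap δ ε) (δ 1) * ((1:A) ⊗ₜ[k] z) := by
  have h1 := congrArg (TensorProduct.map (targetMap δ ε) LinearMap.id)
    (pistar' δ ε h S hS z)
  simp only [map_sum, map_smul, map_tmul, LinearMap.id_coe, id_eq] at h1
  have e1 : TensorProduct.map (targetMap δ ε) (targetMap δ ε) (δ 1) * ((1:A) ⊗ₜ[k] z) =
      ∑ p ∈ S, targetMap δ ε p.1 ⊗ₜ[k] (p.2 * targetMap δ ε z) := by
    rw [qel_exp δ ε h S hS, Finset.sum_mul]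
    refine Finset.sum_congr rfl fun p _ => ?_
    rw [Algebra.TensorProduct.tmul_mul_tmul, mul_one, hz]
  rw [e1, h1, dcf δ ε h S hS hz, Finset.sum_comm]
  refine Finset.sum_congr rfl fun q _ => Eq.symm ?_
  calc ∑ p ∈ S, ε (p.2 * q.1 * z) • (targetMap δ ε p.1 ⊗ₜ[k] q.2)
      = ∑ p ∈ S, ∑ r ∈ S, (ε (r.1 * p.1) * ε (p.2 * (q.1 * z))) • (r.2 ⊗ₜ[k] q.2) := by
        refine Finset.sum_congr rfl fun p _ => ?_
        rw [t_apply δ ε S hS p.1, sum_tmul, Finset.smul_sum]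
        refine Finset.sum_congr rfl fun r _ => ?_
        rw [smul_tmul', smul_smul, mul_comm (ε (p.2 * q.1 * z)), mul_assoc p.2 q.1 z,
          smul_tmul']
    _ = ∑ r ∈ S, ε (r.1 * (q.1 * z)) • (r.2 ⊗ₜ[k] q.2) := by
        rw [Finset.sum_comm]
        refine Finset.sum_congr rfl fun r _ => ?_
        rw [← Finset.sum_smul, wc1_one δ ε h S hS r.1 (q.1 * z)]
    _ = targetMap δ ε (q.1 * z) ⊗ₜ[k] q.2 := by
        rw [t_apply δ ε S hS, sum_tmul]
        exact Finset.sum_congr rfl fun r _ => by rw [smul_tmul']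

lemma frob1 {x y : A} (hx : targetMap δ ε x = x) (hy : targetMap δ ε y = y) :
    TensorProduct.map (LinearMap.mul' k A) LinearMap.id
        ((TensorProduct.assoc k A A A).symm (x ⊗ₜ[k] coprodC δ ε y)) =
      coprodC δ ε (x * y) := by
  rw [form1 δ ε h S hS hy, form1 δ ε h S hS (closure δ ε h S hS hx hy),
    qel_exp' δ ε S hS, Finset.mul_sum, Finset.mul_sum, tmul_sum, map_sum, map_sum]
  refine Finset.sum_congr rfl fun q _ => ?_
  rw [Algebra.TensorProduct.tmul_mul_tmul, one_mul, assoc_symm_tmul, map_tmul,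
    LinearMap.mul'_apply, LinearMap.id_coe, id_eq,
    Algebra.TensorProduct.tmul_mul_tmul, one_mul, mul_assoc]

lemma frob2 {x y : A} (hx : targetMap δ ε x = x) (hy : targetMap δ ε y = y) :
    coprodC δ ε (x * y) =
      TensorProduct.map LinearMap.id (LinearMap.mul' k A)
        (TensorProduct.assoc k A A A (coprodC δ ε x ⊗ₜ[k] y)) := by
  rw [form2 δ ε h S hS hx, form2 δ ε h S hS (closure δ ε h S hS hx hy),
    qel_exp' δ ε S hS, Finset.sum_mul, Finset.sum_mul, sum_tmul, map_sum, map_sum]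
  refine Finset.sum_congr rfl fun q _ => ?_
  rw [Algebra.TensorProduct.tmul_mul_tmul, mul_one, Algebra.TensorProduct.tmul_mul_tmul,
    mul_one, assoc_tmul, map_tmul, LinearMap.mul'_apply, LinearMap.id_coe, id_eq,
    mul_assoc]

lemma coassocC {x : A} (hx : targetMap δ ε x = x) :
    TensorProduct.assoc k A A A
        (TensorProduct.map (coprodC δ ε) LinearMap.id (coprodC δ ε x)) =
      TensorProduct.map LinearMap.id (coprodC δ ε) (coprodC δ ε x) := by
  conv_lhs => rw [form1 δ ε h S hS hx, qel_exp' δ ε S hS, Finset.mul_sum, map_sum, map_sum]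
  conv_rhs => rw [form2 δ ε h S hS hx, qel_exp' δ ε S hS, Finset.sum_mul, map_sum]
  calc ∑ q ∈ S, TensorProduct.assoc k A A A
        (TensorProduct.map (coprodC δ ε) LinearMap.id
          ((x ⊗ₜ[k] 1) * (targetMap δ ε q.1 ⊗ₜ[k] targetMap δ ε q.2)))
      = ∑ q ∈ S, ∑ r ∈ S, targetMap δ ε r.1 ⊗ₜ[k]
          ((targetMap δ ε r.2 * (x * targetMap δ ε q.1)) ⊗ₜ[k] targetMap δ ε q.2) := by
        refine Finset.sum_congr rfl fun q _ => ?_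
        rw [Algebra.TensorProduct.tmul_mul_tmul, one_mul, map_tmul, LinearMap.id_coe, id_eq,
          form2 δ ε h S hS (closure δ ε h S hS hx (t_t δ ε h S hS q.1)),
          qel_exp' δ ε S hS, Finset.sum_mul, sum_tmul, map_sum]
        refine Finset.sum_congr rfl fun r _ => ?_
        rw [Algebra.TensorProduct.tmul_mul_tmul, mul_one, assoc_tmul]
    _ = ∑ r ∈ S, TensorProduct.map LinearMap.id (coprodC δ ε)
          ((targetMap δ ε r.1 ⊗ₜ[k] targetMap δ ε r.2) * ((1:A) ⊗ₜ[k] x)) := by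
        rw [Finset.sum_comm]
        refine Finset.sum_congr rfl fun r _ => ?_
        rw [Algebra.TensorProduct.tmul_mul_tmul, mul_one, map_tmul, LinearMap.id_coe, id_eq,
          form1 δ ε h S hS (closure δ ε h S hS (t_t δ ε h S hS r.2) hx),
          qel_exp' δ ε S hS, Finset.mul_sum, tmul_sum]
        refine Finset.sum_congr rfl fun q _ => ?_
        rw [Algebra.TensorProduct.tmul_mul_tmul, one_mul, mul_assoc]

lemma sepC {x : A} (hx : targetMap δ ε x = x) :
    LinearMap.mul' k A (coprodC δ ε x) = x := by
  rw [dcf δ ε h S hS hx, map_sum]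
  have e2 : (TensorProduct.lid k A) (TensorProduct.map ε LinearMap.id
      ((δ 1 * δ 1) * (x ⊗ₜ[k] 1))) =
      ∑ p ∈ S, (LinearMap.mul' k A) (targetMap δ ε (p.1 * x) ⊗ₜ[k] p.2) := by
    conv_lhs => rw [hS]
    rw [Finset.sum_mul_sum]
    simp only [Finset.sum_mul, map_sum]
    rw [Finset.sum_comm]
    refine Finset.sum_congr rfl fun p _ => ?_
    rw [LinearMap.mul'_apply, t_apply δ ε S hS, Finset.sum_mul]
    refine Finset.sum_congr rfl fun q _ => ?_
    rw [Algebra.TensorProduct.tmul_mul_tmul, Algebra.TensorProduct.tmul_mul_tmul,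
      map_tmul, LinearMap.id_coe, id_eq, lid_tmul, mul_one, smul_mul_assoc,
      mul_assoc q.1 p.1 x]
  rw [← e2, d1_sq δ ε h, ← t_apply' δ ε x, hx]

lemma counitL_C {x : A} (hx : targetMap δ ε x = x) :
    TensorProduct.lid k A (TensorProduct.map ε LinearMap.id (coprodC δ ε x)) = x := by
  rw [dcf δ ε h S hS hx, map_sum, map_sum]
  calc ∑ p ∈ S, (TensorProduct.lid k A)
        (TensorProduct.map ε LinearMap.id (targetMap δ ε (p.1 * x) ⊗ₜ[k] p.2))
      = ∑ p ∈ S, ε (p.1 * x) • p.2 := by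
        refine Finset.sum_congr rfl fun p _ => ?_
        rw [map_tmul, LinearMap.id_coe, id_eq, lid_tmul, eps_t δ ε h S hS]
    _ = x := by rw [← t_apply δ ε S hS, hx]

lemma one_sum : ∑ p ∈ S, ε p.2 • p.1 = 1 := by
  have h0 := congrArg (fun f => f 1) h.counit_right
  simp only [LinearMap.comp_apply, LinearMap.id_coe, id_eq, LinearEquiv.coe_coe,
    hS, map_sum, map_tmul, rid_tmul] at h0
  simpa using h0

lemma counitR_C {x : A} (hx : targetMap δ ε x = x) :
    TensorProduct.rid k A (TensorProduct.map LinearMap.id ε (coprodC δ ε x)) = x := by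
  rw [dcf δ ε h S hS hx, map_sum, map_sum]
  calc ∑ p ∈ S, (TensorProduct.rid k A)
        (TensorProduct.map LinearMap.id ε (targetMap δ ε (p.1 * x) ⊗ₜ[k] p.2))
      = ∑ p ∈ S, ε p.2 • targetMap δ ε (p.1 * x) := by
        refine Finset.sum_congr rfl fun p _ => ?_
        rw [map_tmul, LinearMap.id_coe, id_eq, rid_tmul]
    _ = targetMap δ ε ((∑ p ∈ S, ε p.2 • p.1) * x) := by
        rw [Finset.sum_mul, map_sum]
        exact Finset.sum_congr rfl fun p _ => by rw [smul_mul_assoc, map_smul]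
    _ = x := by rw [one_sum δ ε h S hS, one_mul, hx]

end
end WBAux

/-- The image `C = t(A)` of the target map (described as the set of fixed points of the
idempotent `t`), equipped with the multiplication, unit, comultiplication
`δ_C = (t⊗t)∘δ` and counit `ε` inherited from `A`, is a separable Frobenius monoid:
it is an associative unital algebra and a coassociative counital coalgebra, the
Frobenius compatibility `(μ_C⊗1)(1⊗δ_C) = δ_C∘μ_C = (1⊗μ_C)(δ_C⊗1)` holds, and
`μ_C ∘ δ_C = id_C`. -/
theorem target_subalgebra_separable_frobenius (δ : A →ₗ[k] A ⊗[k] A) (ε : A →ₗ[k] k)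
    (h : IsWeakBialgebra δ ε) :
    -- C is closed under multiplication
    (∀ x y : A, targetMap δ ε x = x → targetMap δ ε y = y →
      targetMap δ ε (x * y) = x * y) ∧
    -- C contains the unit
    targetMap δ ε 1 = 1 ∧
    -- C is an associative unital algebra (multiplication and unit inherited from A)
    (∀ x y z : A, targetMap δ ε x = x → targetMap δ ε y = y → targetMap δ ε z = z →
      x * y * z = x * (y * z)) ∧
    (∀ x : A, targetMap δ ε x = x → 1 * x = x ∧ x * 1 = x) ∧
    -- δ_C is coassociative on C
    (∀ x : A, targetMap δ ε x = x →
      TensorProduct.assoc k A A A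
          (TensorProduct.map (coprodC δ ε) LinearMap.id (coprodC δ ε x)) =
        TensorProduct.map LinearMap.id (coprodC δ ε) (coprodC δ ε x)) ∧
    -- ε is a counit for δ_C on C
    (∀ x : A, targetMap δ ε x = x →
      TensorProduct.lid k A (TensorProduct.map ε LinearMap.id (coprodC δ ε x)) = x) ∧
    (∀ x : A, targetMap δ ε x = x →
      TensorProduct.rid k A (TensorProduct.map LinearMap.id ε (coprodC δ ε x)) = x) ∧
    -- the Frobenius compatibility (μ_C⊗1)(1⊗δ_C) = δ_C∘μ_C = (1⊗μ_C)(δ_C⊗1) on C⊗C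
    (∀ x y : A, targetMap δ ε x = x → targetMap δ ε y = y →
      TensorProduct.map (LinearMap.mul' k A) LinearMap.id
          ((TensorProduct.assoc k A A A).symm (x ⊗ₜ[k] coprodC δ ε y)) =
        coprodC δ ε (x * y) ∧
      coprodC δ ε (x * y) =
        TensorProduct.map LinearMap.id (LinearMap.mul' k A)
          (TensorProduct.assoc k A A A (coprodC δ ε x ⊗ₜ[k] y))) ∧
    -- separability: μ_C ∘ δ_C = id_C
    (∀ x : A, targetMap δ ε x = x → LinearMap.mul' k A (coprodC δ ε x) = x) := by
  obtain ⟨S, hS⟩ := TensorProduct.exists_finset (δ 1)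
  exact ⟨fun x y hx hy => WBAux.closure δ ε h S hS hx hy,
    WBAux.t_one δ ε h S hS,
    fun x y z _ _ _ => mul_assoc x y z,
    fun x _ => ⟨one_mul x, mul_one x⟩,
    fun x hx => WBAux.coassocC δ ε h S hS hx,
    fun x hx => WBAux.counitL_C δ ε h S hS hx,
    fun x hx => WBAux.counitR_C δ ε h S hS hx,
    fun x y hx hy => ⟨WBAux.frob1 δ ε h S hS hx hy, WBAux.frob2 δ ε h S hS hx hy⟩,
    fun x hx => WBAux.sepC δ ε h S hS hx⟩

end
end

section
/- Let A be a weak bialgebra over a commutative ring k with target map t, and let C = t(A) with the comultiplication δ_C(x) = (t⊗t)δ(x) and counit ε. Then t : A → C is a coalgebra map: (t⊗t)∘δ = δ_C∘t and ε∘t = ε. -/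
open TensorProduct

noncomputable section

variable {k : Type*} [CommRing k] {A : Type*} [Ring A] [Algebra k A]

section Aux

variable (ε : A →ₗ[k] k)

/-- `t` with the copy of `δ 1` generalized to an arbitrary tensor `u`. -/
private def tU (u : A ⊗[k] A) : A →ₗ[k] A :=
  (TensorProduct.lid k A).toLinearMap ∘ₗ TensorProduct.map ε LinearMap.id ∘ₗ
    LinearMap.mulLeft k u ∘ₗ (TensorProduct.mk k A A).flip 1

private lemma targetMap_eq_tU (δ : A →ₗ[k] A ⊗[k] A) : targetMap δ ε = tU ε (δ 1) := rfl

private def rS (s : A ⊗[k] A) : A ⊗[k] A →ₗ[k] A :=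
  (TensorProduct.rid k A).toLinearMap ∘ₗ TensorProduct.map LinearMap.id ε ∘ₗ
    LinearMap.mulRight k s

private lemma key1 (u v s : A ⊗[k] A) :
    TensorProduct.map LinearMap.id (tU ε u) (v * s) =
      TensorProduct.map (rS ε s) LinearMap.id
        (((TensorProduct.assoc k A A A).symm ((1 : A) ⊗ₜ[k] u)) * (v ⊗ₜ[k] (1 : A))) := by
  induction v using TensorProduct.induction_on with
  | zero => simp [zero_mul]
  | add v₁ v₂ hv₁ hv₂ =>
    simp only [add_mul, map_add, hv₁, hv₂, TensorProduct.add_tmul, mul_add]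
  | tmul x y =>
    induction s using TensorProduct.induction_on with
    | zero => simp [rS, mul_zero]
    | add s₁ s₂ hs₁ hs₂ =>
      have hrS : ∀ m, rS ε (s₁ + s₂) m = rS ε s₁ m + rS ε s₂ m := by
        intro m
        simp [rS, mul_add]
      have hmapsum : ∀ w : (A ⊗[k] A) ⊗[k] A, TensorProduct.map (rS ε (s₁ + s₂)) LinearMap.id w =
          TensorProduct.map (rS ε s₁) LinearMap.id w +
            TensorProduct.map (rS ε s₂) LinearMap.id w := by
        intro w
        induction w using TensorProduct.induction_on with
        | zero => simp
        | add w₁ w₂ h₁ h₂ => simp only [map_add, h₁, h₂]; abel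
        | tmul m z => simp [hrS, TensorProduct.add_tmul]
      rw [mul_add, map_add, hs₁, hs₂, hmapsum]
    | tmul a b =>
      induction u using TensorProduct.induction_on with
      | zero => simp [tU, rS, zero_mul]
      | add u₁ u₂ hu₁ hu₂ =>
        have htU : ∀ m, tU ε (u₁ + u₂) m = tU ε u₁ m + tU ε u₂ m := by
          intro m
          simp [tU, add_mul]
        have hmapsum : ∀ w : A ⊗[k] A, TensorProduct.map LinearMap.id (tU ε (u₁ + u₂)) w =
            TensorProduct.map LinearMap.id (tU ε u₁) w +
              TensorProduct.map LinearMap.id (tU ε u₂) w := by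
          intro w
          induction w using TensorProduct.induction_on with
          | zero => simp
          | add w₁ w₂ h₁ h₂ => simp only [map_add, h₁, h₂]; abel
          | tmul m z => simp [htU, TensorProduct.tmul_add]
        rw [hmapsum]
        rw [hu₁, hu₂, TensorProduct.tmul_add]
        rw [← map_add, ← add_mul, ← map_add, ← TensorProduct.tmul_add]
      | tmul p q =>
        simp [tU, rS, Algebra.TensorProduct.tmul_mul_tmul, TensorProduct.assoc_symm_tmul,
          TensorProduct.smul_tmul', TensorProduct.tmul_smul, mul_assoc]

private lemma key3 (g : A) (u : A ⊗[k] A) :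
    TensorProduct.map (LinearMap.mulRight k g) LinearMap.id u = u * (g ⊗ₜ[k] (1 : A)) := by
  induction u using TensorProduct.induction_on with
  | zero => simp [zero_mul]
  | add u₁ u₂ h₁ h₂ => simp [add_mul, h₁, h₂]
  | tmul x y => simp [Algebra.TensorProduct.tmul_mul_tmul]

variable (δ : A →ₗ[k] A ⊗[k] A)

/-- Identity (2.7a): `(id ⊗ t) ∘ δ (h) = δ(1) · (h ⊗ 1)`. -/
private lemma id_t_delta (h : IsWeakBialgebra δ ε) (a : A) :
    TensorProduct.map LinearMap.id (targetMap δ ε) (δ a) = δ 1 * (a ⊗ₜ[k] (1 : A)) := by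
  have h1 : δ a = δ 1 * δ a := by rw [← h.mul_compat, one_mul]
  have hkey2 : rS ε (δ a) ∘ₗ δ = LinearMap.mulRight k a := by
    apply LinearMap.ext
    intro x
    have : rS ε (δ a) (δ x) = x * a := by
      simp only [rS, LinearMap.comp_apply, LinearMap.mulRight_apply, ← h.mul_compat]
      have := congrArg (fun f => f (x * a)) h.counit_right
      simpa using this
    simpa [LinearMap.comp_apply] using this
  calc TensorProduct.map LinearMap.id (targetMap δ ε) (δ a)
      = TensorProduct.map LinearMap.id (tU ε (δ 1)) (δ 1 * δ a) := by
        rw [targetMap_eq_tU, ← h1]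
    _ = TensorProduct.map (rS ε (δ a)) LinearMap.id
          (((TensorProduct.assoc k A A A).symm ((1 : A) ⊗ₜ[k] δ 1)) * (δ 1 ⊗ₜ[k] (1 : A))) :=
        key1 ε (δ 1) (δ 1) (δ a)
    _ = TensorProduct.map (rS ε (δ a)) LinearMap.id
          (TensorProduct.map δ LinearMap.id (δ 1)) := by rw [← h.weak_unit₂]
    _ = TensorProduct.map (rS ε (δ a) ∘ₗ δ)
          ((LinearMap.id : A →ₗ[k] A) ∘ₗ LinearMap.id) (δ 1) := by
        rw [TensorProduct.map_comp]; rfl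
    _ = TensorProduct.map (LinearMap.mulRight k a) LinearMap.id (δ 1) := by
        rw [hkey2, LinearMap.id_comp]
    _ = δ 1 * (a ⊗ₜ[k] (1 : A)) := key3 a (δ 1)

private lemma eps_mul_t (h : IsWeakBialgebra δ ε) (x y : A) :
    ε (x * targetMap δ ε y) = ε (x * y) := by
  have h1 : ∀ u : A ⊗[k] A,
      ε (x * tU ε u y) = sweedlerCounit ε x y (TensorProduct.comm k A A u) := by
    intro u
    induction u using TensorProduct.induction_on with
    | zero => simp [tU]
    | add u₁ u₂ hu₁ hu₂ =>
      have : tU ε (u₁ + u₂) y = tU ε u₁ y + tU ε u₂ y := by simp [tU, add_mul]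
      rw [this, mul_add, map_add, hu₁, hu₂, map_add, map_add]
    | tmul p q =>
      simp [tU, sweedlerCounit, Algebra.TensorProduct.tmul_mul_tmul, mul_comm]
  rw [targetMap_eq_tU, h1 (δ 1), ← h.weak_counit₂ x 1 y, mul_one]

private lemma t_mul_t (h : IsWeakBialgebra δ ε) (x y : A) :
    targetMap δ ε (x * targetMap δ ε y) = targetMap δ ε (x * y) := by
  have h1 : ∀ u : A ⊗[k] A, tU ε u (x * targetMap δ ε y) = tU ε u (x * y) := by
    intro u
    induction u using TensorProduct.induction_on with
    | zero => simp [tU]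
    | add u₁ u₂ hu₁ hu₂ =>
      have h2 : ∀ m, tU ε (u₁ + u₂) m = tU ε u₁ m + tU ε u₂ m := by
        intro m; simp [tU, add_mul]
      rw [h2, h2, hu₁, hu₂]
    | tmul p q =>
      have := eps_mul_t ε δ h (p * x) y
      simp [tU, Algebra.TensorProduct.tmul_mul_tmul, mul_assoc] at this ⊢
      rw [this]
  rw [targetMap_eq_tU ε δ]
  exact h1 (δ 1)

end Aux

/-- `t : A → C` is a coalgebra map: `(t⊗t)∘δ = δ_C∘t` and `ε∘t = ε`. -/
theorem targetMap_coalgebra_map (δ : A →ₗ[k] A ⊗[k] A) (ε : A →ₗ[k] k)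
    (h : IsWeakBialgebra δ ε) :
    TensorProduct.map (targetMap δ ε) (targetMap δ ε) ∘ₗ δ =
      coprodC δ ε ∘ₗ targetMap δ ε ∧
    ε ∘ₗ targetMap δ ε = ε := by
  set t := targetMap δ ε with ht
  constructor
  · apply LinearMap.ext
    intro a
    have hmap : ∀ w : A ⊗[k] A, TensorProduct.map t t w =
        TensorProduct.map t LinearMap.id (TensorProduct.map LinearMap.id t w) := by
      intro w
      induction w using TensorProduct.induction_on with
      | zero => simp
      | add w₁ w₂ h₁ h₂ => simp [h₁, h₂]
      | tmul x y => simp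
    have haux : ∀ u : A ⊗[k] A,
        TensorProduct.map t LinearMap.id (u * (a ⊗ₜ[k] (1 : A))) =
          TensorProduct.map t LinearMap.id (u * (t a ⊗ₜ[k] (1 : A))) := by
      intro u
      induction u using TensorProduct.induction_on with
      | zero => simp [zero_mul]
      | add u₁ u₂ h₁ h₂ => simp only [add_mul, map_add, h₁, h₂]
      | tmul x y =>
        simp only [Algebra.TensorProduct.tmul_mul_tmul, TensorProduct.map_tmul, mul_one,
          LinearMap.id_coe, id_eq, ht]
        rw [← t_mul_t ε δ h x a]
    show TensorProduct.map t t (δ a) = (coprodC δ ε ∘ₗ t) a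
    have hrhs : (coprodC δ ε ∘ₗ t) a = TensorProduct.map t t (δ (t a)) := rfl
    rw [hrhs, hmap (δ a), hmap (δ (t a)), id_t_delta ε δ h a, id_t_delta ε δ h (t a)]
    exact haux (δ 1)
  · apply LinearMap.ext
    intro a
    have := eps_mul_t ε δ h 1 a
    simpa using this

end
end

section
/- Let H be a weak Hopf algebra over a commutative ring k with antipode ν. Then ν is an anti-algebra map: ν(1) = 1 and ν(ab) = ν(b)ν(a) for all a,b ∈ H. -/
open TensorProduct

noncomputable section

variable {k : Type*} [CommRing k] {A : Type*} [Ring A] [Algebra k A]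

/-- `ν : A → A` is an antipode for the weak bialgebra `(A, δ, ε)`:
`ν(a₍₁₎)a₍₂₎ = t(a)`, `a₍₁₎ν(a₍₂₎) = r(a)` and `ν(a₍₁₎)a₍₂₎ν(a₍₃₎) = ν(a)`
(i.e. `ν*1 = t`, `1*ν = r`, `ν*1*ν = ν` for the convolution product). -/
def IsAntipode (δ : A →ₗ[k] A ⊗[k] A) (ε : A →ₗ[k] k) (ν : A →ₗ[k] A) : Prop :=
  (∀ a : A, LinearMap.mul' k A (TensorProduct.map ν LinearMap.id (δ a)) = targetMap δ ε a) ∧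
  (∀ a : A, LinearMap.mul' k A (TensorProduct.map LinearMap.id ν (δ a)) = rMap δ ε a) ∧
  (∀ a : A, LinearMap.mul' k A (TensorProduct.map (LinearMap.mul' k A) LinearMap.id
      (TensorProduct.map (TensorProduct.map ν LinearMap.id) ν
        (TensorProduct.map δ LinearMap.id (δ a)))) = ν a)

set_option synthInstance.maxHeartbeats 1000000
set_option maxHeartbeats 1000000

namespace WeakHopfAux

local notation "μ" => LinearMap.mul' k A
local notation "τ" => TensorProduct.map

/-! ### Generic tensor lemmas -/

lemma prod_one_right (u : A ⊗[k] A) (z : A) :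
    u * ((1:A) ⊗ₜ[k] z) = τ LinearMap.id (LinearMap.mulRight k z) u := by
  induction u using TensorProduct.induction_on with
  | zero => simp [zero_mul]
  | tmul x y => simp [Algebra.TensorProduct.tmul_mul_tmul]
  | add u v hu hv => rw [map_add, add_mul, hu, hv]

lemma prod_one_left (u : A ⊗[k] A) (z : A) :
    (z ⊗ₜ[k] (1:A)) * u = τ (LinearMap.mulLeft k z) LinearMap.id u := by
  induction u using TensorProduct.induction_on with
  | zero => simp [mul_zero]
  | tmul x y => simp [Algebra.TensorProduct.tmul_mul_tmul]
  | add u v hu hv => rw [map_add, mul_add, hu, hv]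

lemma prod_one_left₂ (u : A ⊗[k] A) (z : A) :
    ((1:A) ⊗ₜ[k] z) * u = τ LinearMap.id (LinearMap.mulLeft k z) u := by
  induction u using TensorProduct.induction_on with
  | zero => simp [mul_zero]
  | tmul x y => simp [Algebra.TensorProduct.tmul_mul_tmul]
  | add u v hu hv => rw [map_add, mul_add, hu, hv]

lemma prod_one_right₂ (u : A ⊗[k] A) (z : A) :
    u * (z ⊗ₜ[k] (1:A)) = τ (LinearMap.mulRight k z) LinearMap.id u := by
  induction u using TensorProduct.induction_on with
  | zero => simp [zero_mul]
  | tmul x y => simp [Algebra.TensorProduct.tmul_mul_tmul]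
  | add u v hu hv => rw [map_add, add_mul, hu, hv]

lemma mu_map_mulRight (f g : A →ₗ[k] A) (z : A) (u : A ⊗[k] A) :
    μ (τ f (LinearMap.mulRight k z ∘ₗ g) u) = μ (τ f g u) * z := by
  induction u using TensorProduct.induction_on with
  | zero => simp [zero_mul]
  | tmul x y => simp [mul_assoc]
  | add u v hu hv => rw [map_add, map_add, hu, hv, map_add, map_add, add_mul]

lemma mu_map_mulLeft (f g : A →ₗ[k] A) (z : A) (u : A ⊗[k] A) :
    μ (τ (LinearMap.mulLeft k z ∘ₗ f) g u) = z * μ (τ f g u) := by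
  induction u using TensorProduct.induction_on with
  | zero => simp [mul_zero]
  | tmul x y => simp [mul_assoc]
  | add u v hu hv => rw [map_add, map_add, hu, hv, map_add, map_add, mul_add]

variable (δ : A →ₗ[k] A ⊗[k] A) (ε : A →ₗ[k] k) (ν : A →ₗ[k] A)

/-! ### Pointwise descriptions of target and r maps -/

lemma targetMap_apply (a : A) :
    targetMap δ ε a = (TensorProduct.lid k A) (τ ε LinearMap.id (δ 1 * (a ⊗ₜ[k] 1))) := rfl

lemma rMap_apply (a : A) :
    rMap δ ε a = (TensorProduct.rid k A) (τ LinearMap.id ε (δ 1 * ((1:A) ⊗ₜ[k] a))) := rfl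

lemma targetMap_eq (a : A) :
    targetMap δ ε a =
      (TensorProduct.lid k A) (τ (ε ∘ₗ LinearMap.mulRight k a) LinearMap.id (δ 1)) := by
  rw [targetMap_apply]
  have : ∀ u : A ⊗[k] A, (TensorProduct.lid k A) (τ ε LinearMap.id (u * (a ⊗ₜ[k] 1))) =
      (TensorProduct.lid k A) (τ (ε ∘ₗ LinearMap.mulRight k a) LinearMap.id u) := by
    intro u
    induction u using TensorProduct.induction_on with
    | zero => simp [zero_mul]
    | tmul x y => simp [Algebra.TensorProduct.tmul_mul_tmul]
    | add u v hu hv => rw [add_mul, map_add, map_add, map_add, map_add, hu, hv]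
  exact this (δ 1)

lemma rMap_eq (a : A) :
    rMap δ ε a =
      (TensorProduct.rid k A) (τ LinearMap.id (ε ∘ₗ LinearMap.mulRight k a) (δ 1)) := by
  rw [rMap_apply]
  have : ∀ u : A ⊗[k] A, (TensorProduct.rid k A) (τ LinearMap.id ε (u * ((1:A) ⊗ₜ[k] a))) =
      (TensorProduct.rid k A) (τ LinearMap.id (ε ∘ₗ LinearMap.mulRight k a) u) := by
    intro u
    induction u using TensorProduct.induction_on with
    | zero => simp [zero_mul]
    | tmul x y => simp [Algebra.TensorProduct.tmul_mul_tmul]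
    | add u v hu hv => rw [add_mul, map_add, map_add, map_add, map_add, hu, hv]
  exact this (δ 1)

/-! ### Basic consequences -/

lemma counitl (h : IsWeakBialgebra δ ε) (a : A) : (TensorProduct.lid k A) (τ ε LinearMap.id (δ a)) = a := by
  have := congrArg (fun f : A →ₗ[k] A => f a) h.counit_left
  simpa using this

lemma counitr (h : IsWeakBialgebra δ ε) (a : A) : (TensorProduct.rid k A) (τ LinearMap.id ε (δ a)) = a := by
  have := congrArg (fun f : A →ₗ[k] A => f a) h.counit_right
  simpa using this

lemma coassoc_apply (h : IsWeakBialgebra δ ε) (a : A) :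
    (TensorProduct.assoc k A A A) (τ δ LinearMap.id (δ a)) = τ LinearMap.id δ (δ a) := by
  have := congrArg (fun f : A →ₗ[k] A ⊗[k] (A ⊗[k] A) => f a) h.coassoc
  simpa using this

lemma coassoc_apply' (h : IsWeakBialgebra δ ε) (a : A) :
    τ δ LinearMap.id (δ a) = (TensorProduct.assoc k A A A).symm (τ LinearMap.id δ (δ a)) := by
  rw [← coassoc_apply δ ε h a]; simp

lemma t_one (h : IsWeakBialgebra δ ε) : targetMap δ ε 1 = 1 := by
  rw [targetMap_apply]
  rw [show ((1:A) ⊗ₜ[k] (1:A)) = (1 : A ⊗[k] A) from rfl, mul_one]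
  exact counitl δ ε h 1

lemma r_one (h : IsWeakBialgebra δ ε) : rMap δ ε 1 = 1 := by
  rw [rMap_apply]
  rw [show ((1:A) ⊗ₜ[k] (1:A)) = (1 : A ⊗[k] A) from rfl, mul_one]
  exact counitr δ ε h 1

lemma delta_one_mul (h : IsWeakBialgebra δ ε) (a : A) : δ 1 * δ a = δ a := by
  rw [← h.mul_compat, one_mul]

lemma delta_mul_one (h : IsWeakBialgebra δ ε) (a : A) : δ a * δ 1 = δ a := by
  rw [← h.mul_compat, mul_one]

/-- `L2 : t * ν = ν`. -/
lemma L2 (hν : IsAntipode δ ε ν) (a : A) : μ (τ (targetMap δ ε) ν (δ a)) = ν a := by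
  have h3 := hν.2.2 a
  rw [show τ (LinearMap.mul' k A) LinearMap.id
        (τ (τ ν LinearMap.id) ν (τ δ LinearMap.id (δ a)))
      = τ ((LinearMap.mul' k A ∘ₗ τ ν LinearMap.id) ∘ₗ δ) ν (δ a) by
    rw [← LinearMap.comp_apply, ← TensorProduct.map_comp, ← LinearMap.comp_apply,
      ← TensorProduct.map_comp]
    simp] at h3
  rw [show (LinearMap.mul' k A ∘ₗ τ ν LinearMap.id) ∘ₗ δ = targetMap δ ε from
    LinearMap.ext fun x => hν.1 x] at h3
  exact h3

lemma assoc_swap (w : (A ⊗[k] A) ⊗[k] A) :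
    μ (τ (LinearMap.mul' k A) LinearMap.id (τ (τ ν LinearMap.id) ν w)) =
      μ (τ ν (LinearMap.mul' k A ∘ₗ τ LinearMap.id ν) ((TensorProduct.assoc k A A A) w)) := by
  induction w using TensorProduct.induction_on with
  | zero => simp
  | add u v hu hv => simp only [map_add, hu, hv]
  | tmul u z =>
    induction u using TensorProduct.induction_on with
    | zero => simp
    | add u v hu hv =>
      simp only [add_tmul, map_add, hu, hv]
    | tmul x y => simp [mul_assoc]

/-- `L1 : ν * r = ν`. -/
lemma L1 (h : IsWeakBialgebra δ ε) (hν : IsAntipode δ ε ν) (a : A) : μ (τ ν (rMap δ ε) (δ a)) = ν a := by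
  have h3 := hν.2.2 a
  rw [coassoc_apply' δ ε h a] at h3
  rw [show (TensorProduct.assoc k A A A).symm (τ LinearMap.id δ (δ a))
        = (TensorProduct.assoc k A A A).symm (τ LinearMap.id δ (δ a)) from rfl] at h3
  have := assoc_swap (k := k) (A := A) ν ((TensorProduct.assoc k A A A).symm (τ LinearMap.id δ (δ a)))
  rw [this] at h3
  rw [LinearEquiv.apply_symm_apply] at h3
  rw [show τ ν (LinearMap.mul' k A ∘ₗ τ LinearMap.id ν) (τ LinearMap.id δ (δ a))
      = τ ν ((LinearMap.mul' k A ∘ₗ τ LinearMap.id ν) ∘ₗ δ) (δ a) by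
    rw [← LinearMap.comp_apply, ← TensorProduct.map_comp]
    simp] at h3
  rw [show (LinearMap.mul' k A ∘ₗ τ LinearMap.id ν) ∘ₗ δ = rMap δ ε from
    LinearMap.ext fun x => hν.2.1 x] at h3
  exact h3

/-! ### Counit-level lemmas -/

lemma sweedler_tmul (x z u v : A) :
    sweedlerCounit ε x z (u ⊗ₜ[k] v) = ε (x*u) * ε (v*z) := by
  simp [sweedlerCounit]

lemma C1 (h : IsWeakBialgebra δ ε) (x z : A) :
    sweedlerCounit ε x z (δ 1) = ε (x*z) := by
  have := h.weak_counit₁ x 1 z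
  rw [mul_one] at this
  exact this.symm

lemma C2 (h : IsWeakBialgebra δ ε) (x z : A) :
    sweedlerCounit ε x z (TensorProduct.comm k A A (δ 1)) = ε (x*z) := by
  have := h.weak_counit₂ x 1 z
  rw [mul_one] at this
  exact this.symm

lemma eps_lid_aux (X b : A) (u : A ⊗[k] A) :
    ε (X * ((TensorProduct.lid k A) (τ (ε ∘ₗ LinearMap.mulRight k b) LinearMap.id u))) =
      sweedlerCounit ε X b (TensorProduct.comm k A A u) := by
  induction u using TensorProduct.induction_on with
  | zero => simp
  | tmul p q => simp [sweedler_tmul, mul_comm]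
  | add u v hu hv => rw [map_add, map_add, map_add, mul_add, map_add, hu, hv, ← map_add]

lemma eps_rid_aux (X b : A) (u : A ⊗[k] A) :
    ε (X * ((TensorProduct.rid k A) (τ LinearMap.id (ε ∘ₗ LinearMap.mulRight k b) u))) =
      sweedlerCounit ε X b u := by
  induction u using TensorProduct.induction_on with
  | zero => simp
  | tmul p q => simp [sweedler_tmul, mul_comm]
  | add u v hu hv => rw [map_add, map_add, mul_add, map_add, map_add, hu, hv, ← map_add]

/-- `T1 : ε(X · t(b)) = ε(X·b)` -/
lemma T1 (h : IsWeakBialgebra δ ε) (X b : A) :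
    ε (X * targetMap δ ε b) = ε (X * b) := by
  rw [targetMap_eq, eps_lid_aux, C2 δ ε h]

/-- `R1 : ε(X · r(b)) = ε(X·b)` -/
lemma R1 (h : IsWeakBialgebra δ ε) (X b : A) :
    ε (X * rMap δ ε b) = ε (X * b) := by
  rw [rMap_eq, eps_rid_aux, C1 δ ε h]

/-! ### Absorption lemmas -/

lemma rmap_funext (x y : A) (hxy : ∀ q : A, ε (q * x) = ε (q * y)) :
    rMap δ ε x = rMap δ ε y := by
  have e : (ε ∘ₗ LinearMap.mulRight k x) = (ε ∘ₗ LinearMap.mulRight k y) :=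
    LinearMap.ext fun q => by simpa using hxy q
  rw [rMap_eq, rMap_eq, e]

lemma tmap_funext (x y : A) (hxy : ∀ q : A, ε (q * x) = ε (q * y)) :
    targetMap δ ε x = targetMap δ ε y := by
  have e : (ε ∘ₗ LinearMap.mulRight k x) = (ε ∘ₗ LinearMap.mulRight k y) :=
    LinearMap.ext fun q => by simpa using hxy q
  rw [targetMap_eq, targetMap_eq, e]

lemma S2 (h : IsWeakBialgebra δ ε) (a b : A) :
    rMap δ ε (a * rMap δ ε b) = rMap δ ε (a * b) := by
  refine rmap_funext δ ε _ _ fun q => ?_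
  rw [← mul_assoc, R1 δ ε h, mul_assoc]

lemma S3 (h : IsWeakBialgebra δ ε) (a b : A) :
    rMap δ ε (a * targetMap δ ε b) = rMap δ ε (a * b) := by
  refine rmap_funext δ ε _ _ fun q => ?_
  rw [← mul_assoc, T1 δ ε h, mul_assoc]

lemma T2' (h : IsWeakBialgebra δ ε) (a b : A) :
    targetMap δ ε (a * targetMap δ ε b) = targetMap δ ε (a * b) := by
  refine tmap_funext δ ε _ _ fun q => ?_
  rw [← mul_assoc, T1 δ ε h, mul_assoc]

lemma T3 (h : IsWeakBialgebra δ ε) (a b : A) :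
    targetMap δ ε (a * rMap δ ε b) = targetMap δ ε (a * b) := by
  refine tmap_funext δ ε _ _ fun q => ?_
  rw [← mul_assoc, R1 δ ε h, mul_assoc]

/-! ### Structure of `δ 1` -/

/-- `(u ⊗ 1) * assoc⁻¹(1 ⊗ v)`. -/
def P1 (u v : A ⊗[k] A) : (A ⊗[k] A) ⊗[k] A :=
  (u ⊗ₜ[k] (1 : A)) * ((TensorProduct.assoc k A A A).symm ((1 : A) ⊗ₜ[k] v))

/-- `assoc⁻¹(1 ⊗ v) * (u ⊗ 1)`. -/
def P2 (u v : A ⊗[k] A) : (A ⊗[k] A) ⊗[k] A :=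
  ((TensorProduct.assoc k A A A).symm ((1 : A) ⊗ₜ[k] v)) * (u ⊗ₜ[k] (1 : A))

lemma P1_tmul (p q s w : A) :
    P1 (p ⊗ₜ[k] q) (s ⊗ₜ[k] w) = (p ⊗ₜ[k] (q * s)) ⊗ₜ[k] w := by
  simp [P1, Algebra.TensorProduct.tmul_mul_tmul]

lemma P2_tmul (p q s w : A) :
    P2 (p ⊗ₜ[k] q) (s ⊗ₜ[k] w) = (p ⊗ₜ[k] (s * q)) ⊗ₜ[k] w := by
  simp [P2, Algebra.TensorProduct.tmul_mul_tmul]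

lemma P1_zero_left (v : A ⊗[k] A) : P1 (0 : A ⊗[k] A) v = 0 := by
  rw [P1, TensorProduct.zero_tmul, zero_mul]
lemma P1_zero_right (u : A ⊗[k] A) : P1 u (0 : A ⊗[k] A) = 0 := by
  rw [P1, TensorProduct.tmul_zero, LinearEquiv.map_zero, mul_zero]
lemma P2_zero_left (v : A ⊗[k] A) : P2 (0 : A ⊗[k] A) v = 0 := by
  rw [P2, TensorProduct.zero_tmul, mul_zero]
lemma P2_zero_right (u : A ⊗[k] A) : P2 u (0 : A ⊗[k] A) = 0 := by
  rw [P2, TensorProduct.tmul_zero, LinearEquiv.map_zero, zero_mul]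
lemma P1_add_left (u u' v : A ⊗[k] A) : P1 (u + u') v = P1 u v + P1 u' v := by
  rw [P1, TensorProduct.add_tmul, add_mul]; rfl
lemma P1_add_right (u v v' : A ⊗[k] A) : P1 u (v + v') = P1 u v + P1 u v' := by
  rw [P1, TensorProduct.tmul_add, LinearEquiv.map_add, mul_add]; rfl
lemma P2_add_left (u u' v : A ⊗[k] A) : P2 (u + u') v = P2 u v + P2 u' v := by
  rw [P2, TensorProduct.add_tmul, mul_add]; rfl
lemma P2_add_right (u v v' : A ⊗[k] A) : P2 u (v + v') = P2 u v + P2 u v' := by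
  rw [P2, TensorProduct.tmul_add, LinearEquiv.map_add, add_mul]; rfl

lemma wu1 (h : IsWeakBialgebra δ ε) : τ δ LinearMap.id (δ 1) = P1 (δ 1) (δ 1) := h.weak_unit₁
lemma wu2 (h : IsWeakBialgebra δ ε) : τ δ LinearMap.id (δ 1) = P2 (δ 1) (δ 1) := h.weak_unit₂

/-- Helper to do double induction on `P1 u v` / `P2 u v` goals. -/
lemma P_induction {motive : (A ⊗[k] A) → (A ⊗[k] A) → Prop}
    (hz₁ : ∀ v, motive 0 v) (hz₂ : ∀ u, motive u 0)
    (hadd₁ : ∀ u u' v, motive u v → motive u' v → motive (u + u') v)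
    (hadd₂ : ∀ u v v', motive u v → motive u v' → motive u (v + v'))
    (hpure : ∀ p q s w, motive (p ⊗ₜ[k] q) (s ⊗ₜ[k] w)) :
    ∀ u v, motive u v := by
  intro u v
  induction u using TensorProduct.induction_on with
  | zero => exact hz₁ v
  | add u u' hu hu' => exact hadd₁ u u' v hu hu'
  | tmul p q =>
    induction v using TensorProduct.induction_on with
    | zero => exact hz₂ _
    | add v v' hv hv' => exact hadd₂ _ v v' hv hv'
    | tmul s w => exact hpure p q s w

/-- `G3 : (t ⊗ id)(δ 1) = δ 1`. -/
lemma G3 (h : IsWeakBialgebra δ ε) (hν : IsAntipode δ ε ν) :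
    τ (targetMap δ ε) LinearMap.id (δ 1) = δ 1 := by
  have hT : targetMap δ ε = (LinearMap.mul' k A ∘ₗ τ ν LinearMap.id) ∘ₗ δ :=
    (LinearMap.ext fun x => hν.1 x).symm
  have step : ∀ u v : A ⊗[k] A,
      τ (LinearMap.mul' k A ∘ₗ τ ν LinearMap.id) LinearMap.id (P1 u v) =
        ((μ (τ ν LinearMap.id u)) ⊗ₜ[k] (1:A)) * v := by
    refine P_induction ?_ ?_ ?_ ?_ ?_
    · intro v; simp [P1, zero_mul]
    · intro u; simp [P1, mul_zero]
    · intro u u' v hu hu'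
      simp only [P1, add_tmul, add_mul, map_add] at *
      rw [hu, hu', ← add_mul, ← TensorProduct.add_tmul, ← map_add]
    · intro u v v' hv hv'
      simp only [P1, TensorProduct.tmul_add, map_add, mul_add] at *
      rw [hv, hv']
    · intro p q s w
      rw [P1_tmul]
      simp [Algebra.TensorProduct.tmul_mul_tmul, mul_assoc]
  calc τ (targetMap δ ε) LinearMap.id (δ 1)
      = τ (LinearMap.mul' k A ∘ₗ τ ν LinearMap.id) LinearMap.id (τ δ LinearMap.id (δ 1)) := by
        rw [hT]
        conv_rhs => rw [← LinearMap.comp_apply, ← TensorProduct.map_comp]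
        simp
    _ = ((μ (τ ν LinearMap.id (δ 1))) ⊗ₜ[k] (1:A)) * δ 1 := by rw [wu1 δ ε h, step]
    _ = δ 1 := by
        rw [hν.1 1, t_one δ ε h]
        rw [show ((1:A) ⊗ₜ[k] (1:A)) = (1 : A ⊗[k] A) from rfl, one_mul]

/-- `G4 : (id ⊗ r)(δ 1) = δ 1`. -/
lemma G4 (h : IsWeakBialgebra δ ε) (hν : IsAntipode δ ε ν) :
    τ LinearMap.id (rMap δ ε) (δ 1) = δ 1 := by
  have hR : rMap δ ε = (LinearMap.mul' k A ∘ₗ τ LinearMap.id ν) ∘ₗ δ :=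
    (LinearMap.ext fun x => hν.2.1 x).symm
  have step : ∀ u v : A ⊗[k] A,
      τ LinearMap.id (LinearMap.mul' k A ∘ₗ τ LinearMap.id ν)
          ((TensorProduct.assoc k A A A) (P1 u v)) =
        u * ((1:A) ⊗ₜ[k] (μ (τ LinearMap.id ν v))) := by
    refine P_induction ?_ ?_ ?_ ?_ ?_
    · intro v; simp [P1, zero_mul]
    · intro u; simp [P1, mul_zero]
    · intro u u' v hu hu'
      simp only [P1, add_tmul, add_mul, map_add] at *
      rw [hu, hu', ← add_mul]
    · intro u v v' hv hv'
      simp only [P1, TensorProduct.tmul_add, map_add, mul_add] at *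
      rw [hv, hv']
    · intro p q s w
      rw [P1_tmul]
      simp [Algebra.TensorProduct.tmul_mul_tmul, mul_assoc]
  calc τ LinearMap.id (rMap δ ε) (δ 1)
      = τ LinearMap.id (LinearMap.mul' k A ∘ₗ τ LinearMap.id ν) (τ LinearMap.id δ (δ 1)) := by
        rw [hR]
        conv_rhs => rw [← LinearMap.comp_apply, ← TensorProduct.map_comp]
        simp
    _ = τ LinearMap.id (LinearMap.mul' k A ∘ₗ τ LinearMap.id ν)
          ((TensorProduct.assoc k A A A) (P1 (δ 1) (δ 1))) := by
        rw [← wu1 δ ε h, coassoc_apply δ ε h]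
    _ = δ 1 * ((1:A) ⊗ₜ[k] (μ (τ LinearMap.id ν (δ 1)))) := step _ _
    _ = δ 1 := by
        rw [hν.2.1 1, r_one δ ε h]
        rw [show ((1:A) ⊗ₜ[k] (1:A)) = (1 : A ⊗[k] A) from rfl, mul_one]

/-- `r` with `δ 1` replaced by a general element `u`. -/
def rAux (u : A ⊗[k] A) : A →ₗ[k] A :=
  (TensorProduct.rid k A).toLinearMap ∘ₗ TensorProduct.map LinearMap.id ε ∘ₗ
    LinearMap.mulLeft k u ∘ₗ TensorProduct.mk k A A 1

lemma rAux_delta_one : rAux ε (δ 1) = rMap δ ε := rfl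

lemma rAux_tmul (p q s : A) : rAux ε (p ⊗ₜ[k] q) s = ε (q * s) • p := by
  simp [rAux, Algebra.TensorProduct.tmul_mul_tmul]

lemma rAux_zero : rAux ε (0 : A ⊗[k] A) = 0 :=
  LinearMap.ext fun s => by simp [rAux, zero_mul]

lemma rAux_add (u u' : A ⊗[k] A) : rAux ε (u + u') = rAux ε u + rAux ε u' :=
  LinearMap.ext fun s => by simp [rAux, add_mul]

/-- `F2 : (r ⊗ id)(δ 1) = δ 1`. -/
lemma F2 (h : IsWeakBialgebra δ ε) :
    τ (rMap δ ε) LinearMap.id (δ 1) = δ 1 := by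
  set χ : A ⊗[k] (A ⊗[k] A) →ₗ[k] A ⊗[k] A :=
    τ LinearMap.id ((TensorProduct.lid k A).toLinearMap ∘ₗ τ ε LinearMap.id) with hχ
  have step : ∀ u v : A ⊗[k] A,
      χ ((TensorProduct.assoc k A A A) (P1 u v)) = τ (rAux ε u) LinearMap.id v := by
    refine P_induction ?_ ?_ ?_ ?_ ?_
    · intro v
      rw [P1_zero_left, LinearEquiv.map_zero, map_zero, rAux_zero,
        TensorProduct.map_zero_left, LinearMap.zero_apply]
    · intro u; rw [P1_zero_right, LinearEquiv.map_zero, map_zero, map_zero]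
    · intro u u' v hu hu'
      rw [P1_add_left, LinearEquiv.map_add, map_add, hu, hu', rAux_add,
        TensorProduct.map_add_left, LinearMap.add_apply]
    · intro u v v' hv hv'
      rw [P1_add_right, LinearEquiv.map_add, map_add, hv, hv', map_add]
    · intro p q s w
      rw [P1_tmul]
      simp [hχ, rAux_tmul, TensorProduct.smul_tmul', TensorProduct.tmul_smul]
  have step2 : χ (τ LinearMap.id δ (δ 1)) = δ 1 := by
    rw [hχ, ← LinearMap.comp_apply, ← TensorProduct.map_comp]
    have : ((TensorProduct.lid k A).toLinearMap ∘ₗ τ ε LinearMap.id) ∘ₗ δ = LinearMap.id :=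
      h.counit_left
    rw [LinearMap.id_comp, this]
    simp
  calc τ (rMap δ ε) LinearMap.id (δ 1)
      = τ (rAux ε (δ 1)) LinearMap.id (δ 1) := by rw [rAux_delta_one]
    _ = χ ((TensorProduct.assoc k A A A) (P1 (δ 1) (δ 1))) := (step _ _).symm
    _ = χ ((TensorProduct.assoc k A A A) (τ δ LinearMap.id (δ 1))) := by rw [← wu1 δ ε h]
    _ = χ (τ LinearMap.id δ (δ 1)) := by rw [coassoc_apply δ ε h]
    _ = δ 1 := step2

/-! ### Commutation of target and r values -/

lemma comm_tr (h : IsWeakBialgebra δ ε) (x y : A) :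
    targetMap δ ε x * rMap δ ε y = rMap δ ε y * targetMap δ ε x := by
  set F : A ⊗[k] A →ₗ[k] A :=
    (TensorProduct.lid k A).toLinearMap ∘ₗ τ (ε ∘ₗ LinearMap.mulRight k x) LinearMap.id with hF
  set G : A →ₗ[k] k := ε ∘ₗ LinearMap.mulRight k y with hG
  set Φ : (A ⊗[k] A) ⊗[k] A →ₗ[k] A :=
    (TensorProduct.rid k A).toLinearMap ∘ₗ τ F G with hΦ
  set Rv : A ⊗[k] A →ₗ[k] A :=
    (TensorProduct.rid k A).toLinearMap ∘ₗ τ LinearMap.id G with hRv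
  have e1 : ∀ u v : A ⊗[k] A, Φ (P1 u v) = F u * Rv v := by
    refine P_induction ?_ ?_ ?_ ?_ ?_
    · intro v; rw [P1_zero_left, map_zero, map_zero, zero_mul]
    · intro u; rw [P1_zero_right, map_zero, map_zero, mul_zero]
    · intro u u' v hu hu'; rw [P1_add_left, map_add, map_add, hu, hu', add_mul]
    · intro u v v' hv hv'; rw [P1_add_right, map_add, map_add, hv, hv', mul_add]
    · intro p q s w
      rw [P1_tmul]
      simp [hΦ, hF, hG, hRv, smul_mul_assoc, mul_smul_comm, smul_smul, mul_comm]
  have e2 : ∀ u v : A ⊗[k] A, Φ (P2 u v) = Rv v * F u := by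
    refine P_induction ?_ ?_ ?_ ?_ ?_
    · intro v; rw [P2_zero_left, map_zero, map_zero, mul_zero]
    · intro u; rw [P2_zero_right, map_zero, map_zero, zero_mul]
    · intro u u' v hu hu'; rw [P2_add_left, map_add, map_add, hu, hu', mul_add]
    · intro u v v' hv hv'; rw [P2_add_right, map_add, map_add, hv, hv', add_mul]
    · intro p q s w
      rw [P2_tmul]
      simp [hΦ, hF, hG, hRv, smul_mul_assoc, mul_smul_comm, smul_smul, mul_comm]
  have hTx : targetMap δ ε x = F (δ 1) := targetMap_eq δ ε x
  have hRy : rMap δ ε y = Rv (δ 1) := rMap_eq δ ε y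
  calc targetMap δ ε x * rMap δ ε y = F (δ 1) * Rv (δ 1) := by rw [hTx, hRy]
    _ = Φ (P1 (δ 1) (δ 1)) := (e1 _ _).symm
    _ = Φ (τ δ LinearMap.id (δ 1)) := by rw [← wu1 δ ε h]
    _ = Φ (P2 (δ 1) (δ 1)) := by rw [wu2 δ ε h]
    _ = Rv (δ 1) * F (δ 1) := e2 _ _
    _ = rMap δ ε y * targetMap δ ε x := by rw [← hTx, ← hRy]

/-! ### Coproducts of target/r values -/

lemma dT_expand (c : A) :
    δ (targetMap δ ε c) =
      (TensorProduct.lid k (A ⊗[k] A))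
        (τ (ε ∘ₗ LinearMap.mulRight k c) LinearMap.id (τ LinearMap.id δ (δ 1))) := by
  rw [targetMap_eq]
  have : ∀ u : A ⊗[k] A,
      δ ((TensorProduct.lid k A) (τ (ε ∘ₗ LinearMap.mulRight k c) LinearMap.id u)) =
        (TensorProduct.lid k (A ⊗[k] A))
          (τ (ε ∘ₗ LinearMap.mulRight k c) LinearMap.id (τ LinearMap.id δ u)) := by
    intro u
    induction u using TensorProduct.induction_on with
    | zero => simp
    | tmul p q => simp
    | add u v hu hv => simp only [map_add, hu, hv]
  exact this (δ 1)

lemma dR_expand (c : A) :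
    δ (rMap δ ε c) =
      (TensorProduct.rid k (A ⊗[k] A))
        (τ LinearMap.id (ε ∘ₗ LinearMap.mulRight k c) (τ δ LinearMap.id (δ 1))) := by
  rw [rMap_eq]
  have : ∀ u : A ⊗[k] A,
      δ ((TensorProduct.rid k A) (τ LinearMap.id (ε ∘ₗ LinearMap.mulRight k c) u)) =
        (TensorProduct.rid k (A ⊗[k] A))
          (τ LinearMap.id (ε ∘ₗ LinearMap.mulRight k c) (τ δ LinearMap.id u)) := by
    intro u
    induction u using TensorProduct.induction_on with
    | zero => simp
    | tmul p q => simp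
    | add u v hu hv => simp only [map_add, hu, hv]
  exact this (δ 1)

lemma XiP1 (c : A) (u v : A ⊗[k] A) :
    (TensorProduct.lid k (A ⊗[k] A))
        (τ (ε ∘ₗ LinearMap.mulRight k c) LinearMap.id
          ((TensorProduct.assoc k A A A) (P1 u v))) =
      (((TensorProduct.lid k A) (τ (ε ∘ₗ LinearMap.mulRight k c) LinearMap.id u))
          ⊗ₜ[k] (1:A)) * v := by
  induction u using TensorProduct.induction_on with
  | zero =>
    simp only [P1_zero_left, LinearEquiv.map_zero, map_zero, TensorProduct.zero_tmul, zero_mul]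
  | add u u' hu hu' =>
    simp only [P1_add_left, LinearEquiv.map_add, map_add, hu, hu',
      TensorProduct.add_tmul, add_mul]
  | tmul p q =>
    induction v using TensorProduct.induction_on with
    | zero => simp only [P1_zero_right, LinearEquiv.map_zero, map_zero, mul_zero]
    | add v v' hv hv' => simp only [P1_add_right, LinearEquiv.map_add, map_add, hv, hv', mul_add]
    | tmul s w =>
      rw [P1_tmul]
      simp [Algebra.TensorProduct.tmul_mul_tmul, TensorProduct.smul_tmul',
        smul_mul_assoc, mul_assoc]

lemma XiP2 (c : A) (u v : A ⊗[k] A) :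
    (TensorProduct.lid k (A ⊗[k] A))
        (τ (ε ∘ₗ LinearMap.mulRight k c) LinearMap.id
          ((TensorProduct.assoc k A A A) (P2 u v))) =
      v * (((TensorProduct.lid k A) (τ (ε ∘ₗ LinearMap.mulRight k c) LinearMap.id u))
          ⊗ₜ[k] (1:A)) := by
  induction u using TensorProduct.induction_on with
  | zero =>
    simp only [P2_zero_left, LinearEquiv.map_zero, map_zero, TensorProduct.zero_tmul, mul_zero]
  | add u u' hu hu' =>
    simp only [P2_add_left, LinearEquiv.map_add, map_add, hu, hu',
      TensorProduct.add_tmul, mul_add]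
  | tmul p q =>
    induction v using TensorProduct.induction_on with
    | zero => simp only [P2_zero_right, LinearEquiv.map_zero, map_zero, zero_mul]
    | add v v' hv hv' => simp only [P2_add_right, LinearEquiv.map_add, map_add, hv, hv', add_mul]
    | tmul s w =>
      rw [P2_tmul]
      simp [Algebra.TensorProduct.tmul_mul_tmul, TensorProduct.smul_tmul',
        mul_smul_comm, smul_mul_assoc]

lemma ThP1 (c : A) (u v : A ⊗[k] A) :
    (TensorProduct.rid k (A ⊗[k] A))
        (τ LinearMap.id (ε ∘ₗ LinearMap.mulRight k c) (P1 u v)) =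
      u * ((1:A) ⊗ₜ[k]
        ((TensorProduct.rid k A) (τ LinearMap.id (ε ∘ₗ LinearMap.mulRight k c) v))) := by
  induction u using TensorProduct.induction_on with
  | zero => simp only [P1_zero_left, map_zero, zero_mul]
  | add u u' hu hu' => simp only [P1_add_left, map_add, hu, hu', add_mul]
  | tmul p q =>
    induction v using TensorProduct.induction_on with
    | zero =>
      simp only [P1_zero_right, map_zero, TensorProduct.tmul_zero, mul_zero]
    | add v v' hv hv' =>
      simp only [P1_add_right, map_add, hv, hv', TensorProduct.tmul_add, mul_add]
    | tmul s w =>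
      rw [P1_tmul]
      simp [Algebra.TensorProduct.tmul_mul_tmul, TensorProduct.tmul_smul, mul_smul_comm]

lemma ThP2 (c : A) (u v : A ⊗[k] A) :
    (TensorProduct.rid k (A ⊗[k] A))
        (τ LinearMap.id (ε ∘ₗ LinearMap.mulRight k c) (P2 u v)) =
      ((1:A) ⊗ₜ[k]
        ((TensorProduct.rid k A) (τ LinearMap.id (ε ∘ₗ LinearMap.mulRight k c) v))) * u := by
  induction u using TensorProduct.induction_on with
  | zero => simp only [P2_zero_left, map_zero, mul_zero]
  | add u u' hu hu' => simp only [P2_add_left, map_add, hu, hu', mul_add]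
  | tmul p q =>
    induction v using TensorProduct.induction_on with
    | zero =>
      simp only [P2_zero_right, map_zero, TensorProduct.tmul_zero, zero_mul]
    | add v v' hv hv' =>
      simp only [P2_add_right, map_add, hv, hv', TensorProduct.tmul_add, add_mul]
    | tmul s w =>
      rw [P2_tmul]
      simp [Algebra.TensorProduct.tmul_mul_tmul, TensorProduct.tmul_smul,
        smul_mul_assoc, mul_smul_comm]

lemma DTa (h : IsWeakBialgebra δ ε) (c : A) :
    δ (targetMap δ ε c) = (targetMap δ ε c ⊗ₜ[k] (1:A)) * δ 1 := by
  rw [dT_expand, ← coassoc_apply δ ε h, wu1 δ ε h, XiP1 ε c, ← targetMap_eq]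

lemma DTb (h : IsWeakBialgebra δ ε) (c : A) :
    δ (targetMap δ ε c) = δ 1 * (targetMap δ ε c ⊗ₜ[k] (1:A)) := by
  rw [dT_expand, ← coassoc_apply δ ε h, wu2 δ ε h, XiP2 ε c, ← targetMap_eq]

lemma DTd (h : IsWeakBialgebra δ ε) (c : A) :
    δ (rMap δ ε c) = δ 1 * ((1:A) ⊗ₜ[k] rMap δ ε c) := by
  rw [dR_expand, wu1 δ ε h, ThP1 ε c, ← rMap_eq]

lemma DTc (h : IsWeakBialgebra δ ε) (c : A) :
    δ (rMap δ ε c) = ((1:A) ⊗ₜ[k] rMap δ ε c) * δ 1 := by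
  rw [dR_expand, wu2 δ ε h, ThP2 ε c, ← rMap_eq]

/-! ### Products with target/r values -/

lemma D1 (h : IsWeakBialgebra δ ε) (c a : A) :
    δ (targetMap δ ε c * a) = (targetMap δ ε c ⊗ₜ[k] (1:A)) * δ a := by
  rw [h.mul_compat, DTa δ ε h, mul_assoc, delta_one_mul δ ε h]

lemma D3 (h : IsWeakBialgebra δ ε) (c a : A) :
    δ (a * targetMap δ ε c) = δ a * (targetMap δ ε c ⊗ₜ[k] (1:A)) := by
  rw [h.mul_compat, DTb δ ε h, ← mul_assoc, delta_mul_one δ ε h]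

lemma D2R (h : IsWeakBialgebra δ ε) (c a : A) :
    δ (rMap δ ε c * a) = ((1:A) ⊗ₜ[k] rMap δ ε c) * δ a := by
  rw [h.mul_compat, DTc δ ε h, mul_assoc, delta_one_mul δ ε h]

lemma D4R (h : IsWeakBialgebra δ ε) (c a : A) :
    δ (a * rMap δ ε c) = δ a * ((1:A) ⊗ₜ[k] rMap δ ε c) := by
  rw [h.mul_compat, DTd δ ε h, ← mul_assoc, delta_mul_one δ ε h]

/-! ### The antipode fixes r/t values; rigidity -/

lemma mapmapAA' {M N P Q R S : Type*} [AddCommMonoid M] [AddCommMonoid N] [AddCommMonoid P]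
    [AddCommMonoid Q] [AddCommMonoid R] [AddCommMonoid S] [Module k M] [Module k N]
    [Module k P] [Module k Q] [Module k R] [Module k S]
    (f₂ : P →ₗ[k] R) (g₂ : Q →ₗ[k] S) (f₁ : M →ₗ[k] P) (g₁ : N →ₗ[k] Q) (x : M ⊗[k] N) :
    TensorProduct.map f₂ g₂ (TensorProduct.map f₁ g₁ x) =
      TensorProduct.map (f₂ ∘ₗ f₁) (g₂ ∘ₗ g₁) x := by
  rw [TensorProduct.map_comp]; rfl

lemma mapmapAA (f₂ g₂ f₁ g₁ : A →ₗ[k] A) (x : A ⊗[k] A) :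
    τ f₂ g₂ (τ f₁ g₁ x) = τ (f₂ ∘ₗ f₁) (g₂ ∘ₗ g₁) x := by
  rw [TensorProduct.map_comp]; rfl

lemma nu_r_fix (h : IsWeakBialgebra δ ε) (hν : IsAntipode δ ε ν) (c : A) :
    ν (rMap δ ε c) = rMap δ ε c := by
  have e0 : ν (rMap δ ε c) = μ (τ (targetMap δ ε) ν (δ (rMap δ ε c))) :=
    (L2 δ ε ν hν _).symm
  rw [e0, DTd δ ε h, prod_one_right, mapmapAA]
  rw [show (targetMap δ ε ∘ₗ LinearMap.id) = LinearMap.id ∘ₗ targetMap δ ε by simp]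
  rw [show (ν ∘ₗ LinearMap.mulRight k (rMap δ ε c)) =
      (ν ∘ₗ LinearMap.mulRight k (rMap δ ε c)) ∘ₗ LinearMap.id by simp]
  rw [← mapmapAA, G3 δ ε ν h hν]
  rw [show τ LinearMap.id (ν ∘ₗ LinearMap.mulRight k (rMap δ ε c)) (δ 1)
      = τ LinearMap.id ν (τ LinearMap.id (LinearMap.mulRight k (rMap δ ε c)) (δ 1)) by
    rw [mapmapAA]; simp]
  rw [← prod_one_right, ← D4R δ ε h c 1, hν.2.1, S2 δ ε h 1 c, one_mul]

/-- `NU : (ν ⊗ id)(δ 1) = δ 1`. -/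
lemma NU (h : IsWeakBialgebra δ ε) (hν : IsAntipode δ ε ν) :
    τ ν LinearMap.id (δ 1) = δ 1 := by
  conv_lhs => rw [← F2 δ ε h, mapmapAA]
  have : ν ∘ₗ rMap δ ε = rMap δ ε := LinearMap.ext fun c => nu_r_fix δ ε ν h hν c
  rw [this]
  rw [show (LinearMap.id ∘ₗ LinearMap.id : A →ₗ[k] A) = LinearMap.id by simp]
  exact F2 δ ε h

/-- `U1 : μ(δ 1) = 1`. -/
lemma U1 (h : IsWeakBialgebra δ ε) (hν : IsAntipode δ ε ν) : μ (δ 1) = 1 := by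
  have := hν.1 1
  rw [NU δ ε ν h hν] at this
  rw [this, t_one δ ε h]

/-- `t = r`. -/
lemma teqr (h : IsWeakBialgebra δ ε) (hν : IsAntipode δ ε ν) (a : A) :
    targetMap δ ε a = rMap δ ε a := by
  have swap : ∀ u : A ⊗[k] A,
      (TensorProduct.lid k A) (τ (ε ∘ₗ LinearMap.mulRight k a) LinearMap.id
        (τ LinearMap.id (rMap δ ε) u)) =
      rMap δ ε ((TensorProduct.lid k A) (τ (ε ∘ₗ LinearMap.mulRight k a) LinearMap.id u)) := by
    intro u
    induction u using TensorProduct.induction_on with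
    | zero => simp
    | tmul p q => simp
    | add u v hu hv => simp only [map_add, hu, hv]
  have e1 : targetMap δ ε a =
      rMap δ ε ((TensorProduct.lid k A)
        (τ (ε ∘ₗ LinearMap.mulRight k a) LinearMap.id (δ 1))) := by
    rw [targetMap_eq]
    conv_lhs => rw [← G4 δ ε ν h hν]
    exact swap (δ 1)
  rw [e1, ← targetMap_eq]
  have : rMap δ ε (targetMap δ ε a) = rMap δ ε a := by
    have := S3 δ ε h 1 a
    rwa [one_mul, one_mul] at this
  exact this

lemma t_idem (h : IsWeakBialgebra δ ε) (c : A) :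
    targetMap δ ε (targetMap δ ε c) = targetMap δ ε c := by
  have := T2' δ ε h 1 c
  rwa [one_mul, one_mul] at this

lemma r_t (h : IsWeakBialgebra δ ε) (c : A) :
    rMap δ ε (targetMap δ ε c) = rMap δ ε c := by
  have := S3 δ ε h 1 c
  rwa [one_mul, one_mul] at this

/-! ### Multiplicativity of the target map -/

/-- `πR : t(x·t(c)) = t(x)·t(c)`. -/
lemma piR (h : IsWeakBialgebra δ ε) (hν : IsAntipode δ ε ν) (x c : A) :
    targetMap δ ε (x * targetMap δ ε c) = targetMap δ ε x * targetMap δ ε c := by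
  have e0 : targetMap δ ε (x * targetMap δ ε c)
      = μ (τ ν LinearMap.id (δ (x * targetMap δ ε c))) := (hν.1 _).symm
  rw [e0]
  rw [show δ (x * targetMap δ ε c) = δ x * ((1:A) ⊗ₜ[k] targetMap δ ε c) by
    rw [teqr δ ε ν h hν c, D4R δ ε h]]
  rw [prod_one_right, mapmapAA]
  rw [show (LinearMap.id ∘ₗ LinearMap.mulRight k (targetMap δ ε c) : A →ₗ[k] A)
      = LinearMap.mulRight k (targetMap δ ε c) ∘ₗ LinearMap.id by simp]
  rw [show (ν ∘ₗ LinearMap.id : A →ₗ[k] A) = ν by simp]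
  rw [mu_map_mulRight, hν.1 x]

/-- `πL : t(t(c)·x) = t(c)·t(x)`. -/
lemma piL (h : IsWeakBialgebra δ ε) (hν : IsAntipode δ ε ν) (x c : A) :
    targetMap δ ε (targetMap δ ε c * x) = targetMap δ ε c * targetMap δ ε x := by
  rw [teqr δ ε ν h hν (targetMap δ ε c * x)]
  have e0 : rMap δ ε (targetMap δ ε c * x)
      = μ (τ LinearMap.id ν (δ (targetMap δ ε c * x))) := (hν.2.1 _).symm
  rw [e0, D1 δ ε h, prod_one_left, mapmapAA]
  rw [show (LinearMap.id ∘ₗ LinearMap.mulLeft k (targetMap δ ε c) : A →ₗ[k] A)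
      = LinearMap.mulLeft k (targetMap δ ε c) ∘ₗ LinearMap.id by simp]
  rw [show (ν ∘ₗ LinearMap.id : A →ₗ[k] A) = ν by simp]
  rw [mu_map_mulLeft, hν.2.1 x, ← teqr δ ε ν h hν x]

/-- `πMULT : t(x·y) = t(x)·t(y)`. -/
lemma piMult (h : IsWeakBialgebra δ ε) (hν : IsAntipode δ ε ν) (x y : A) :
    targetMap δ ε (x * y) = targetMap δ ε x * targetMap δ ε y := by
  rw [← T2' δ ε h x y, piR δ ε ν h hν]

lemma rMult (h : IsWeakBialgebra δ ε) (hν : IsAntipode δ ε ν) (x y : A) :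
    rMap δ ε (x * y) = rMap δ ε x * rMap δ ε y := by
  rw [← teqr δ ε ν h hν, ← teqr δ ε ν h hν, ← teqr δ ε ν h hν, piMult δ ε ν h hν]

/-! ### `ν` is a bimodule map over target values -/

/-- `CS' : ν(c·t(w)) = ν(c)·t(w)`. -/
lemma nu_mul_t (h : IsWeakBialgebra δ ε) (hν : IsAntipode δ ε ν) (c w : A) :
    ν (c * targetMap δ ε w) = ν c * targetMap δ ε w := by
  have e0 : ν (c * targetMap δ ε w)
      = μ (τ ν (rMap δ ε) (δ (c * targetMap δ ε w))) := (L1 δ ε ν h hν _).symm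
  rw [e0]
  rw [show δ (c * targetMap δ ε w) = δ c * ((1:A) ⊗ₜ[k] targetMap δ ε w) by
    rw [teqr δ ε ν h hν w, D4R δ ε h]]
  rw [prod_one_right, mapmapAA]
  have key : rMap δ ε ∘ₗ LinearMap.mulRight k (targetMap δ ε w)
      = LinearMap.mulRight k (targetMap δ ε w) ∘ₗ rMap δ ε := by
    refine LinearMap.ext fun q => ?_
    simp only [LinearMap.comp_apply, LinearMap.id_apply, LinearMap.mulRight_apply]
    rw [rMult δ ε ν h hν, r_t δ ε h w, ← teqr δ ε ν h hν w]
  rw [show τ (ν ∘ₗ LinearMap.id) (rMap δ ε ∘ₗ LinearMap.mulRight k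
      (targetMap δ ε w)) (δ c) = τ ν (LinearMap.mulRight k (targetMap δ ε w) ∘ₗ rMap δ ε)
      (δ c) by rw [key]; simp]
  rw [mu_map_mulRight, L1 δ ε ν h hν]

/-- `CT' : ν(t(w)·c) = t(w)·ν(c)`. -/
lemma t_mul_nu (h : IsWeakBialgebra δ ε) (hν : IsAntipode δ ε ν) (c w : A) :
    ν (targetMap δ ε w * c) = targetMap δ ε w * ν c := by
  have e0 : ν (targetMap δ ε w * c)
      = μ (τ (targetMap δ ε) ν (δ (targetMap δ ε w * c))) := (L2 δ ε ν hν _).symm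
  rw [e0, D1 δ ε h, prod_one_left, mapmapAA]
  have key : targetMap δ ε ∘ₗ LinearMap.mulLeft k (targetMap δ ε w)
      = LinearMap.mulLeft k (targetMap δ ε w) ∘ₗ targetMap δ ε := by
    refine LinearMap.ext fun q => ?_
    simp only [LinearMap.comp_apply, LinearMap.mulLeft_apply]
    rw [piL δ ε ν h hν]
  rw [show τ (targetMap δ ε ∘ₗ LinearMap.mulLeft k (targetMap δ ε w))
      (ν ∘ₗ LinearMap.id) (δ c) = τ (LinearMap.mulLeft k (targetMap δ ε w) ∘ₗ targetMap δ ε)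
      ν (δ c) by rw [key]; simp]
  rw [mu_map_mulLeft, L2 δ ε ν hν]

/-! ### The counit-like properties of t and r -/

lemma comm_tt (h : IsWeakBialgebra δ ε) (hν : IsAntipode δ ε ν) (x y : A) :
    targetMap δ ε x * targetMap δ ε y = targetMap δ ε y * targetMap δ ε x := by
  have := comm_tr δ ε h x y
  rwa [← teqr δ ε ν h hν y] at this

/-- `P_r : ∑ r(c₍₁₎)·c₍₂₎ = c`. -/
lemma P_r (h : IsWeakBialgebra δ ε) (hν : IsAntipode δ ε ν) (c : A) :
    μ (τ (rMap δ ε) LinearMap.id (δ c)) = c := by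
  have claimB : ∀ u v m : A ⊗[k] A,
      μ (τ (rAux ε u) LinearMap.id (v * m)) =
        μ (τ LinearMap.id ((TensorProduct.lid k A).toLinearMap ∘ₗ τ ε LinearMap.id ∘ₗ
            LinearMap.mulRight k m) ((TensorProduct.assoc k A A A) (P1 u v))) := by
    intro u v m
    induction u using TensorProduct.induction_on with
    | zero =>
      rw [rAux_zero, TensorProduct.map_zero_left, LinearMap.zero_apply, map_zero,
        P1_zero_left, LinearEquiv.map_zero, map_zero, map_zero]
    | add u u' hu hu' =>
      rw [rAux_add, TensorProduct.map_add_left, LinearMap.add_apply, map_add, hu, hu',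
        P1_add_left, LinearEquiv.map_add, map_add, map_add]
    | tmul p q =>
      induction v using TensorProduct.induction_on with
      | zero =>
        rw [zero_mul, map_zero, map_zero, P1_zero_right, LinearEquiv.map_zero, map_zero,
          map_zero]
      | add v v' hv hv' =>
        rw [add_mul, map_add, map_add, hv, hv', P1_add_right, LinearEquiv.map_add,
          map_add, map_add]
      | tmul s w =>
        rw [P1_tmul]
        induction m using TensorProduct.induction_on with
        | zero => simp
        | add m m' hm hm' =>
          simp only [mul_add, map_add, LinearMap.coe_comp, Function.comp_apply,
            LinearMap.mulRight_apply, TensorProduct.map_tmul, LinearMap.id_coe, id_eq,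
            TensorProduct.assoc_tmul] at *
          rw [hm, hm', TensorProduct.tmul_add, map_add]
        | tmul x y =>
          simp [Algebra.TensorProduct.tmul_mul_tmul, rAux_tmul, TensorProduct.smul_tmul',
            TensorProduct.tmul_smul, smul_mul_assoc, mul_assoc]
  have key2 : ((TensorProduct.lid k A).toLinearMap ∘ₗ τ ε LinearMap.id ∘ₗ
      LinearMap.mulRight k (δ c)) ∘ₗ δ = LinearMap.mulRight k c := by
    refine LinearMap.ext fun q => ?_
    simp only [LinearMap.comp_apply, LinearMap.mulRight_apply, LinearEquiv.coe_coe]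
    rw [← h.mul_compat, counitl δ ε h]
  calc μ (τ (rMap δ ε) LinearMap.id (δ c))
      = μ (τ (rAux ε (δ 1)) LinearMap.id (δ 1 * δ c)) := by
        rw [rAux_delta_one, delta_one_mul δ ε h]
    _ = μ (τ LinearMap.id ((TensorProduct.lid k A).toLinearMap ∘ₗ τ ε LinearMap.id ∘ₗ
            LinearMap.mulRight k (δ c)) ((TensorProduct.assoc k A A A) (P1 (δ 1) (δ 1)))) :=
        claimB _ _ _
    _ = μ (τ LinearMap.id ((TensorProduct.lid k A).toLinearMap ∘ₗ τ ε LinearMap.id ∘ₗ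
            LinearMap.mulRight k (δ c)) (τ LinearMap.id δ (δ 1))) := by
        rw [← wu1 δ ε h, coassoc_apply δ ε h]
    _ = μ (τ LinearMap.id (LinearMap.mulRight k c) (δ 1)) := by
        rw [mapmapAA']
        rw [key2]
        simp
    _ = μ (τ LinearMap.id LinearMap.id (δ 1)) * c := by
        rw [show (LinearMap.mulRight k c : A →ₗ[k] A)
            = LinearMap.mulRight k c ∘ₗ LinearMap.id by simp]
        rw [mu_map_mulRight]
    _ = c := by
        rw [show τ (LinearMap.id : A →ₗ[k] A) (LinearMap.id : A →ₗ[k] A) = LinearMap.id from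
          TensorProduct.map_id]
        rw [LinearMap.id_apply, U1 δ ε ν h hν, one_mul]

/-- `P_t : ∑ c₍₁₎·t(c₍₂₎) = c`. -/
lemma P_t (h : IsWeakBialgebra δ ε) (hν : IsAntipode δ ε ν) (c : A) :
    μ (τ LinearMap.id (targetMap δ ε) (δ c)) = c := by
  have hT : targetMap δ ε = (LinearMap.mul' k A ∘ₗ τ ν LinearMap.id) ∘ₗ δ :=
    (LinearMap.ext fun x => hν.1 x).symm
  have hR : (LinearMap.mul' k A ∘ₗ τ LinearMap.id ν) ∘ₗ δ = rMap δ ε :=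
    LinearMap.ext fun x => hν.2.1 x
  have as2 : ∀ w : (A ⊗[k] A) ⊗[k] A,
      μ (τ LinearMap.id (LinearMap.mul' k A ∘ₗ τ ν LinearMap.id)
        ((TensorProduct.assoc k A A A) w)) =
      μ (τ (LinearMap.mul' k A ∘ₗ τ LinearMap.id ν) LinearMap.id w) := by
    intro w
    induction w using TensorProduct.induction_on with
    | zero => simp
    | add w w' hw hw' => simp only [map_add, hw, hw']
    | tmul W z =>
      induction W using TensorProduct.induction_on with
      | zero => simp [TensorProduct.zero_tmul]
      | add W W' hW hW' => simp only [TensorProduct.add_tmul, map_add, hW, hW']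
      | tmul x y => simp [mul_assoc]
  calc μ (τ LinearMap.id (targetMap δ ε) (δ c))
      = μ (τ LinearMap.id (LinearMap.mul' k A ∘ₗ τ ν LinearMap.id) (τ LinearMap.id δ (δ c))) := by
        rw [hT]
        rw [mapmapAA']
        simp
    _ = μ (τ LinearMap.id (LinearMap.mul' k A ∘ₗ τ ν LinearMap.id)
          ((TensorProduct.assoc k A A A) (τ δ LinearMap.id (δ c)))) := by
        rw [coassoc_apply δ ε h]
    _ = μ (τ (LinearMap.mul' k A ∘ₗ τ LinearMap.id ν) LinearMap.id (τ δ LinearMap.id (δ c))) :=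
        as2 _
    _ = μ (τ (rMap δ ε) LinearMap.id (δ c)) := by
        rw [mapmapAA', hR]
        simp
    _ = c := P_r δ ε ν h hν c

/-! ### The two key lemmas `L5`, `L6` -/

/-- `L6fin : ∑ x₍₁₎·r(c)·ν(x₍₂₎) = r(x)·r(c)`. -/
lemma L6fin (h : IsWeakBialgebra δ ε) (hν : IsAntipode δ ε ν) (x c : A) :
    μ (τ (LinearMap.mulRight k (rMap δ ε c)) ν (δ x)) = rMap δ ε x * rMap δ ε c := by
  have step1 : ∀ u : A ⊗[k] A,
      μ (τ (LinearMap.mulRight k (rMap δ ε c)) ν u) =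
        μ (τ LinearMap.id (ν ∘ₗ LinearMap.mulLeft k (rMap δ ε c)) u) := by
    intro u
    induction u using TensorProduct.induction_on with
    | zero => simp
    | add u v hu hv => simp only [map_add, hu, hv]
    | tmul p q =>
      simp only [TensorProduct.map_tmul, LinearMap.mul'_apply, LinearMap.mulRight_apply,
        LinearMap.id_coe, id_eq, LinearMap.comp_apply, LinearMap.mulLeft_apply]
      rw [← teqr δ ε ν h hν c, t_mul_nu δ ε ν h hν, teqr δ ε ν h hν c, mul_assoc]
  rw [step1]
  rw [show τ LinearMap.id (ν ∘ₗ LinearMap.mulLeft k (rMap δ ε c)) (δ x)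
      = τ LinearMap.id ν (τ LinearMap.id (LinearMap.mulLeft k (rMap δ ε c)) (δ x)) by
    rw [mapmapAA]; simp]
  rw [← prod_one_left₂, ← D2R δ ε h c x, hν.2.1, rMult δ ε ν h hν]
  have ridem : rMap δ ε (rMap δ ε c) = rMap δ ε c := by
    have := S2 δ ε h 1 c
    rwa [one_mul, one_mul] at this
  rw [ridem]
  have := comm_tr δ ε h x c
  rw [← teqr δ ε ν h hν x, ← teqr δ ε ν h hν c] at *
  rw [comm_tt δ ε ν h hν c x]

/-- `L5fin : ∑ ν(x₍₁₎)·t(c)·x₍₂₎ = t(x)·t(c)`. -/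
lemma L5fin (h : IsWeakBialgebra δ ε) (hν : IsAntipode δ ε ν) (x c : A) :
    μ (τ ν (LinearMap.mulLeft k (targetMap δ ε c)) (δ x)) =
      targetMap δ ε x * targetMap δ ε c := by
  have step1 : ∀ u : A ⊗[k] A,
      μ (τ ν (LinearMap.mulLeft k (targetMap δ ε c)) u) =
        μ (τ (ν ∘ₗ LinearMap.mulRight k (targetMap δ ε c)) LinearMap.id u) := by
    intro u
    induction u using TensorProduct.induction_on with
    | zero => simp
    | add u v hu hv => simp only [map_add, hu, hv]
    | tmul p q =>
      simp only [TensorProduct.map_tmul, LinearMap.mul'_apply, LinearMap.mulLeft_apply,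
        LinearMap.id_coe, id_eq, LinearMap.comp_apply, LinearMap.mulRight_apply]
      rw [nu_mul_t δ ε ν h hν, mul_assoc]
  rw [step1]
  rw [show τ (ν ∘ₗ LinearMap.mulRight k (targetMap δ ε c)) LinearMap.id (δ x)
      = τ ν LinearMap.id (τ (LinearMap.mulRight k (targetMap δ ε c)) LinearMap.id (δ x)) by
    rw [mapmapAA]; simp]
  rw [← prod_one_right₂, ← D3 δ ε h c x, hν.1, piR δ ε ν h hν]

/-! ### Endgame -/

lemma mul_mul_mul_comm' (a b c d : A) (hbc : b * c = c * b) :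
    (a * b) * (c * d) = (a * c) * (b * d) := by
  rw [mul_assoc, ← mul_assoc b c d, hbc, mul_assoc c b d, ← mul_assoc]

/-- `F(x ⊗ y) = ν(y)·ν(x)`. -/
def Fm : A ⊗[k] A →ₗ[k] A :=
  LinearMap.mul' k A ∘ₗ τ ν ν ∘ₗ (TensorProduct.comm k A A).toLinearMap

lemma Fm_tmul (p q : A) : Fm ν (p ⊗ₜ[k] q) = ν q * ν p := by simp [Fm]

lemma assoc_opq (W : A ⊗[k] A) (z : A) :
    (TensorProduct.assoc k A A A) (W ⊗ₜ[k] z) =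
      τ LinearMap.id ((TensorProduct.mk k A A).flip z) W := by
  induction W using TensorProduct.induction_on with
  | zero => simp [TensorProduct.zero_tmul]
  | tmul x y => simp
  | add u v hu hv => rw [TensorProduct.add_tmul, LinearEquiv.map_add, map_add, hu, hv]

/-- `ν 1 = 1`. -/
lemma nu_one (h : IsWeakBialgebra δ ε) (hν : IsAntipode δ ε ν) : ν 1 = 1 := by
  have h3 := hν.2.2 1
  rw [wu1 δ ε h] at h3
  have claim : ∀ u v : A ⊗[k] A,
      μ (τ (LinearMap.mul' k A) LinearMap.id
        (τ (τ ν LinearMap.id) ν (P1 u v))) =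
      μ (τ ν LinearMap.id u) * μ (τ LinearMap.id ν v) := by
    refine P_induction ?_ ?_ ?_ ?_ ?_
    · intro v; simp [P1_zero_left]
    · intro u; simp [P1_zero_right]
    · intro u u' v hu hu'
      simp only [P1_add_left, map_add, hu, hu', add_mul]
    · intro u v v' hv hv'
      simp only [P1_add_right, map_add, hv, hv', mul_add]
    · intro p q s w
      rw [P1_tmul]
      simp [mul_assoc]
  rw [claim, hν.1 1, hν.2.1 1, t_one δ ε h, r_one δ ε h, one_mul] at h3
  exact h3.symm

/-- `Z1` : the interleaved product `∑ ν(w₁)·t(u₁)·w₂·ν(w₃)·ν(u₂)`. -/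
def Z1 (w : (A ⊗[k] A) ⊗[k] A) (u : A ⊗[k] A) : A :=
  μ (τ (LinearMap.mul' k A ∘ₗ τ ν (targetMap δ ε))
      (LinearMap.mul' k A ∘ₗ τ (LinearMap.mul' k A ∘ₗ τ LinearMap.id ν) ν)
      ((TensorProduct.tensorTensorTensorComm k A (A ⊗[k] A) A A)
        ((TensorProduct.assoc k A A A) w ⊗ₜ[k] u)))

lemma Z1_zero_left (u : A ⊗[k] A) : Z1 δ ε ν (0 : (A ⊗[k] A) ⊗[k] A) u = 0 := by
  simp [Z1, TensorProduct.zero_tmul]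

lemma Z1_zero_right (w : (A ⊗[k] A) ⊗[k] A) : Z1 δ ε ν w (0 : A ⊗[k] A) = 0 := by
  simp [Z1, TensorProduct.tmul_zero]

lemma Z1_add_left (w w' : (A ⊗[k] A) ⊗[k] A) (u : A ⊗[k] A) :
    Z1 δ ε ν (w + w') u = Z1 δ ε ν w u + Z1 δ ε ν w' u := by
  simp only [Z1, LinearEquiv.map_add, TensorProduct.add_tmul, map_add]

lemma Z1_add_right (w : (A ⊗[k] A) ⊗[k] A) (u u' : A ⊗[k] A) :
    Z1 δ ε ν w (u + u') = Z1 δ ε ν w u + Z1 δ ε ν w u' := by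
  simp only [Z1, TensorProduct.tmul_add, map_add]

lemma ZAhelp (h : IsWeakBialgebra δ ε) (W : A ⊗[k] A) (c z x₂ : A) :
    μ (τ (LinearMap.mul' k A ∘ₗ τ ν (targetMap δ ε))
      (LinearMap.mul' k A ∘ₗ τ (LinearMap.mul' k A ∘ₗ τ LinearMap.id ν) ν)
      ((TensorProduct.tensorTensorTensorComm k A (A ⊗[k] A) A A)
        ((τ LinearMap.id ((TensorProduct.mk k A A).flip z) W) ⊗ₜ[k] (c ⊗ₜ[k] x₂)))) =
    μ (τ ν (LinearMap.mulLeft k (targetMap δ ε c)) W) * (ν z * ν x₂) := by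
  induction W using TensorProduct.induction_on with
  | zero => simp [TensorProduct.zero_tmul]
  | add u v hu hv =>
    rw [map_add, TensorProduct.add_tmul, LinearEquiv.map_add, map_add, map_add, hu, hv,
      map_add, map_add, add_mul]
  | tmul α β =>
    rw [show τ LinearMap.id ((TensorProduct.mk k A A).flip z) (α ⊗ₜ[k] β)
        = α ⊗ₜ[k] (β ⊗ₜ[k] z) by simp]
    rw [TensorProduct.tensorTensorTensorComm_tmul]
    simp [mul_assoc]

lemma ZA (h : IsWeakBialgebra δ ε) (hν : IsAntipode δ ε ν) (u v : A ⊗[k] A) :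
    Z1 δ ε ν (τ δ LinearMap.id v) u =
      μ (τ (targetMap δ ε ∘ₗ LinearMap.mul' k A) (Fm ν)
        ((TensorProduct.tensorTensorTensorComm k A A A A) (u ⊗ₜ[k] v))) := by
  induction u using TensorProduct.induction_on with
  | zero => rw [Z1_zero_right, TensorProduct.zero_tmul, LinearEquiv.map_zero, map_zero, map_zero]
  | add u u' hu hu' =>
    rw [Z1_add_right, hu, hu', TensorProduct.add_tmul, LinearEquiv.map_add, map_add, map_add]
  | tmul x₁ x₂ =>
    induction v using TensorProduct.induction_on with
    | zero =>
      rw [map_zero, Z1_zero_left, TensorProduct.tmul_zero, LinearEquiv.map_zero, map_zero,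
        map_zero]
    | add v v' hv hv' =>
      rw [map_add, Z1_add_left, hv, hv', TensorProduct.tmul_add, LinearEquiv.map_add,
        map_add, map_add]
    | tmul y₁ y₂ =>
      rw [show τ δ LinearMap.id (y₁ ⊗ₜ[k] y₂) = (δ y₁) ⊗ₜ[k] y₂ by simp]
      rw [Z1, assoc_opq, ZAhelp δ ε ν h, L5fin δ ε ν h hν,
        comm_tt δ ε ν h hν y₁ x₁, ← piMult δ ε ν h hν,
        TensorProduct.tensorTensorTensorComm_tmul]
      simp [Fm_tmul]

lemma ZB (hν : IsAntipode δ ε ν) (v u : A ⊗[k] A) :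
    Z1 δ ε ν ((TensorProduct.assoc k A A A).symm (τ LinearMap.id δ v)) u =
      μ (τ (LinearMap.mul' k A ∘ₗ τ ν (targetMap δ ε))
          (LinearMap.mul' k A ∘ₗ τ (rMap δ ε) ν)
        ((TensorProduct.tensorTensorTensorComm k A A A A) (v ⊗ₜ[k] u))) := by
  induction v using TensorProduct.induction_on with
  | zero =>
    rw [map_zero, LinearEquiv.map_zero, Z1_zero_left, TensorProduct.zero_tmul,
      LinearEquiv.map_zero, map_zero, map_zero]
  | add v v' hv hv' =>
    rw [map_add, LinearEquiv.map_add, Z1_add_left, hv, hv', TensorProduct.add_tmul,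
      LinearEquiv.map_add, map_add, map_add]
  | tmul y₁ y₂ =>
    induction u using TensorProduct.induction_on with
    | zero =>
      rw [Z1_zero_right, TensorProduct.tmul_zero, LinearEquiv.map_zero, map_zero, map_zero]
    | add u u' hu hu' =>
      rw [Z1_add_right, hu, hu', TensorProduct.tmul_add, LinearEquiv.map_add, map_add,
        map_add]
    | tmul x₁ x₂ =>
      rw [show τ LinearMap.id δ (y₁ ⊗ₜ[k] y₂) = y₁ ⊗ₜ[k] (δ y₂) by simp]
      rw [Z1, LinearEquiv.apply_symm_apply, TensorProduct.tensorTensorTensorComm_tmul,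
        TensorProduct.tensorTensorTensorComm_tmul]
      simp only [TensorProduct.map_tmul, LinearMap.comp_apply, LinearMap.mul'_apply]
      rw [hν.2.1 y₂]

lemma QF (h : IsWeakBialgebra δ ε) (v u : A ⊗[k] A) :
    μ (τ (LinearMap.mul' k A ∘ₗ τ ν (targetMap δ ε))
        (LinearMap.mul' k A ∘ₗ τ (rMap δ ε) ν)
      ((TensorProduct.tensorTensorTensorComm k A A A A) (v ⊗ₜ[k] u))) =
      μ (τ ν (rMap δ ε) v) * μ (τ (targetMap δ ε) ν u) := by
  induction v using TensorProduct.induction_on with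
  | zero => simp [TensorProduct.zero_tmul]
  | add v v' hv hv' =>
    rw [TensorProduct.add_tmul, LinearEquiv.map_add, map_add, map_add, hv, hv', map_add,
      map_add, add_mul]
  | tmul y₁ y₂ =>
    induction u using TensorProduct.induction_on with
    | zero => simp [TensorProduct.tmul_zero]
    | add u u' hu hu' =>
      rw [TensorProduct.tmul_add, LinearEquiv.map_add, map_add, map_add, hu, hu', map_add,
        map_add, mul_add]
    | tmul x₁ x₂ =>
      rw [TensorProduct.tensorTensorTensorComm_tmul]
      simp only [TensorProduct.map_tmul, LinearMap.comp_apply, LinearMap.mul'_apply]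
      exact mul_mul_mul_comm' _ _ _ _ (comm_tr δ ε h x₁ y₂)

lemma f4 (hν : IsAntipode δ ε ν) (u v : A ⊗[k] A) :
    μ (τ (LinearMap.mul' k A) (Fm ν)
      ((TensorProduct.tensorTensorTensorComm k A A A A) (u ⊗ₜ[k] v))) =
      μ (τ (LinearMap.mulRight k (μ (τ LinearMap.id ν v))) ν u) := by
  induction u using TensorProduct.induction_on with
  | zero => simp [TensorProduct.zero_tmul]
  | add u u' hu hu' =>
    rw [TensorProduct.add_tmul, LinearEquiv.map_add, map_add, map_add, hu, hu', map_add,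
      map_add]
  | tmul p q =>
    induction v using TensorProduct.induction_on with
    | zero => simp [TensorProduct.tmul_zero]
    | add v v' hv hv' =>
      rw [TensorProduct.tmul_add, LinearEquiv.map_add, map_add, map_add, hv, hv']
      simp only [TensorProduct.map_tmul, LinearMap.mul'_apply, LinearMap.mulRight_apply,
        map_add, LinearMap.id_coe, id_eq]
      rw [← add_mul, ← mul_add]
    | tmul s w =>
      rw [TensorProduct.tensorTensorTensorComm_tmul]
      simp [Fm_tmul, mul_assoc]

lemma CA (h : IsWeakBialgebra δ ε) (hν : IsAntipode δ ε ν) (u v : A ⊗[k] A) :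
    μ (τ (ν ∘ₗ LinearMap.mul' k A)
        (LinearMap.mul' k A ∘ₗ τ (LinearMap.mul' k A) (Fm ν) ∘ₗ
          (TensorProduct.tensorTensorTensorComm k A A A A).toLinearMap)
      ((TensorProduct.tensorTensorTensorComm k A (A ⊗[k] A) A (A ⊗[k] A))
        ((τ LinearMap.id δ u) ⊗ₜ[k] (τ LinearMap.id δ v)))) =
      μ (τ ν (rMap δ ε) (u * v)) := by
  induction u using TensorProduct.induction_on with
  | zero => simp [TensorProduct.zero_tmul, zero_mul]
  | add u u' hu hu' =>
    rw [map_add, TensorProduct.add_tmul, LinearEquiv.map_add, map_add, map_add, hu, hu',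
      add_mul, map_add, map_add]
  | tmul x₁ x₂ =>
    induction v using TensorProduct.induction_on with
    | zero => simp [TensorProduct.tmul_zero, mul_zero]
    | add v v' hv hv' =>
      rw [map_add, TensorProduct.tmul_add, LinearEquiv.map_add, map_add, map_add, hv, hv',
        mul_add, map_add, map_add]
    | tmul y₁ y₂ =>
      rw [show τ LinearMap.id δ (x₁ ⊗ₜ[k] x₂) = x₁ ⊗ₜ[k] (δ x₂) by simp,
        show τ LinearMap.id δ (y₁ ⊗ₜ[k] y₂) = y₁ ⊗ₜ[k] (δ y₂) by simp,
        TensorProduct.tensorTensorTensorComm_tmul]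
      simp only [TensorProduct.map_tmul, LinearMap.comp_apply, LinearMap.mul'_apply,
        LinearEquiv.coe_coe]
      rw [f4 δ ε ν hν, hν.2.1 y₂, L6fin δ ε ν h hν, ← rMult δ ε ν h hν]
      rw [Algebra.TensorProduct.tmul_mul_tmul]
      simp

lemma CBhelp (W W' : A ⊗[k] A) (z z' : A) :
    μ (τ (ν ∘ₗ LinearMap.mul' k A)
        (LinearMap.mul' k A ∘ₗ τ (LinearMap.mul' k A) (Fm ν) ∘ₗ
          (TensorProduct.tensorTensorTensorComm k A A A A).toLinearMap)
      ((TensorProduct.tensorTensorTensorComm k A (A ⊗[k] A) A (A ⊗[k] A))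
        ((τ LinearMap.id ((TensorProduct.mk k A A).flip z) W) ⊗ₜ[k]
          (τ LinearMap.id ((TensorProduct.mk k A A).flip z') W')))) =
    μ (τ ν LinearMap.id (W * W')) * (ν z' * ν z) := by
  induction W using TensorProduct.induction_on with
  | zero => simp [TensorProduct.zero_tmul, zero_mul]
  | add W₁ W₂ hW₁ hW₂ =>
    rw [map_add, TensorProduct.add_tmul, LinearEquiv.map_add, map_add, map_add, hW₁, hW₂,
      add_mul, map_add, map_add, add_mul]
  | tmul α β =>
    induction W' using TensorProduct.induction_on with
    | zero => simp [TensorProduct.tmul_zero, mul_zero]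
    | add W₁ W₂ hW₁ hW₂ =>
      rw [map_add, TensorProduct.tmul_add, LinearEquiv.map_add, map_add, map_add, hW₁, hW₂,
        mul_add, map_add, map_add, add_mul]
    | tmul γ η =>
      rw [show τ LinearMap.id ((TensorProduct.mk k A A).flip z) (α ⊗ₜ[k] β)
          = α ⊗ₜ[k] (β ⊗ₜ[k] z) by simp,
        show τ LinearMap.id ((TensorProduct.mk k A A).flip z') (γ ⊗ₜ[k] η)
          = γ ⊗ₜ[k] (η ⊗ₜ[k] z') by simp,
        TensorProduct.tensorTensorTensorComm_tmul]
      simp only [TensorProduct.map_tmul, LinearMap.comp_apply, LinearMap.mul'_apply,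
        LinearEquiv.coe_coe, TensorProduct.tensorTensorTensorComm_tmul, Fm_tmul,
        Algebra.TensorProduct.tmul_mul_tmul, LinearMap.id_coe, id_eq]
      simp [mul_assoc]

lemma CB (h : IsWeakBialgebra δ ε) (hν : IsAntipode δ ε ν) (u v : A ⊗[k] A) :
    μ (τ (ν ∘ₗ LinearMap.mul' k A)
        (LinearMap.mul' k A ∘ₗ τ (LinearMap.mul' k A) (Fm ν) ∘ₗ
          (TensorProduct.tensorTensorTensorComm k A A A A).toLinearMap)
      ((TensorProduct.tensorTensorTensorComm k A (A ⊗[k] A) A (A ⊗[k] A))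
        (((TensorProduct.assoc k A A A) (τ δ LinearMap.id u)) ⊗ₜ[k]
          ((TensorProduct.assoc k A A A) (τ δ LinearMap.id v))))) =
    μ (τ (targetMap δ ε ∘ₗ LinearMap.mul' k A) (Fm ν)
      ((TensorProduct.tensorTensorTensorComm k A A A A) (u ⊗ₜ[k] v))) := by
  induction u using TensorProduct.induction_on with
  | zero => simp [TensorProduct.zero_tmul]
  | add u₁ u₂ hu₁ hu₂ =>
    rw [map_add, LinearEquiv.map_add, TensorProduct.add_tmul, LinearEquiv.map_add, map_add,
      map_add, hu₁, hu₂, TensorProduct.add_tmul, LinearEquiv.map_add, map_add, map_add]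
  | tmul x₁ x₂ =>
    induction v using TensorProduct.induction_on with
    | zero => simp [TensorProduct.tmul_zero]
    | add v₁ v₂ hv₁ hv₂ =>
      rw [map_add, LinearEquiv.map_add, TensorProduct.tmul_add, LinearEquiv.map_add, map_add,
        map_add, hv₁, hv₂, TensorProduct.tmul_add, LinearEquiv.map_add, map_add, map_add]
    | tmul y₁ y₂ =>
      rw [show τ δ LinearMap.id (x₁ ⊗ₜ[k] x₂) = (δ x₁) ⊗ₜ[k] x₂ by simp,
        show τ δ LinearMap.id (y₁ ⊗ₜ[k] y₂) = (δ y₁) ⊗ₜ[k] y₂ by simp,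
        assoc_opq, assoc_opq, CBhelp ν (δ x₁) (δ y₁) x₂ y₂, ← h.mul_compat, hν.1,
        TensorProduct.tensorTensorTensorComm_tmul]
      simp [Fm_tmul, mul_assoc]

/-- Main computation: `ν(ab) = ν(b)·ν(a)`. -/
lemma nu_antimul (h : IsWeakBialgebra δ ε) (hν : IsAntipode δ ε ν) (a b : A) :
    ν (a * b) = ν b * ν a := by
  calc ν (a * b)
      = μ (τ ν (rMap δ ε) (δ (a * b))) := (L1 δ ε ν h hν _).symm
    _ = μ (τ ν (rMap δ ε) (δ a * δ b)) := by rw [h.mul_compat]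
    _ = μ (τ (ν ∘ₗ LinearMap.mul' k A)
          (LinearMap.mul' k A ∘ₗ τ (LinearMap.mul' k A) (Fm ν) ∘ₗ
            (TensorProduct.tensorTensorTensorComm k A A A A).toLinearMap)
        ((TensorProduct.tensorTensorTensorComm k A (A ⊗[k] A) A (A ⊗[k] A))
          ((τ LinearMap.id δ (δ a)) ⊗ₜ[k] (τ LinearMap.id δ (δ b))))) :=
        (CA δ ε ν h hν (δ a) (δ b)).symm
    _ = μ (τ (ν ∘ₗ LinearMap.mul' k A)
          (LinearMap.mul' k A ∘ₗ τ (LinearMap.mul' k A) (Fm ν) ∘ₗ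
            (TensorProduct.tensorTensorTensorComm k A A A A).toLinearMap)
        ((TensorProduct.tensorTensorTensorComm k A (A ⊗[k] A) A (A ⊗[k] A))
          (((TensorProduct.assoc k A A A) (τ δ LinearMap.id (δ a))) ⊗ₜ[k]
            ((TensorProduct.assoc k A A A) (τ δ LinearMap.id (δ b)))))) := by
        rw [coassoc_apply δ ε h a, coassoc_apply δ ε h b]
    _ = μ (τ (targetMap δ ε ∘ₗ LinearMap.mul' k A) (Fm ν)
        ((TensorProduct.tensorTensorTensorComm k A A A A) (δ a ⊗ₜ[k] δ b))) :=
        CB δ ε ν h hν (δ a) (δ b)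
    _ = Z1 δ ε ν (τ δ LinearMap.id (δ b)) (δ a) := (ZA δ ε ν h hν (δ a) (δ b)).symm
    _ = Z1 δ ε ν ((TensorProduct.assoc k A A A).symm (τ LinearMap.id δ (δ b))) (δ a) := by
        rw [← coassoc_apply' δ ε h b]
    _ = μ (τ (LinearMap.mul' k A ∘ₗ τ ν (targetMap δ ε))
          (LinearMap.mul' k A ∘ₗ τ (rMap δ ε) ν)
        ((TensorProduct.tensorTensorTensorComm k A A A A) (δ b ⊗ₜ[k] δ a))) :=
        ZB δ ε ν hν (δ b) (δ a)
    _ = μ (τ ν (rMap δ ε) (δ b)) * μ (τ (targetMap δ ε) ν (δ a)) := QF δ ε ν h (δ b) (δ a)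
    _ = ν b * ν a := by rw [L1 δ ε ν h hν, L2 δ ε ν hν]

end WeakHopfAux

/-- The antipode of a weak Hopf algebra is an anti-algebra map:
`ν(1) = 1` and `ν(ab) = ν(b)ν(a)`. -/
theorem antipode_anti_algebra_map (δ : A →ₗ[k] A ⊗[k] A) (ε : A →ₗ[k] k) (ν : A →ₗ[k] A)
    (h : IsWeakBialgebra δ ε) (hν : IsAntipode δ ε ν) :
    ν 1 = 1 ∧ ∀ a b : A, ν (a * b) = ν b * ν a :=
  ⟨WeakHopfAux.nu_one δ ε ν h hν, fun a b => WeakHopfAux.nu_antimul δ ε ν h hν a b⟩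

end
end

section
/- Let R be a separable Frobenius algebra over a commutative ring k (a Frobenius algebra with μ∘δ = id). Then A = R⊗R, with multiplication (a⊗b)(a'⊗b') = a'a ⊗ bb' (i.e. R^op ⊗ R as an algebra), unit 1⊗1, comultiplication Δ(a⊗b) = (a ⊗ x₍₁₎)⊗(x₍₂₎ ⊗ b), where x₍₁₎⊗x₍₂₎ = δ(1), and counit ε(a⊗b) = ε_Frob(ab), is a weak bialgebra. -/
/-! A separable Frobenius algebra R yields a weak bialgebra R ⊗ R. -/

open TensorProduct MulOpposite

noncomputable section

variable {k : Type*} [CommRing k] {A : Type*} [Ring A] [Algebra k A]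

variable {k : Type*} [CommRing k] {R : Type*} [Ring R] [Algebra k R]

section FrobeniusData

variable (δR : R →ₗ[k] R ⊗[k] R) (εR : R →ₗ[k] k)

/-- `(δR, εR)` makes the `k`-algebra `R` into a Frobenius algebra: `(δR, εR)` is a
coassociative counital coalgebra structure satisfying the Frobenius compatibility
`(μ⊗1)(1⊗δ) = δ∘μ = (1⊗μ)(δ⊗1)`. -/
structure IsFrobeniusAlgebra : Prop where
  coassoc : (TensorProduct.assoc k R R R).toLinearMap ∘ₗ
      TensorProduct.map δR LinearMap.id ∘ₗ δR = TensorProduct.map LinearMap.id δR ∘ₗ δR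
  counit_left : (TensorProduct.lid k R).toLinearMap ∘ₗ
      TensorProduct.map εR LinearMap.id ∘ₗ δR = LinearMap.id
  counit_right : (TensorProduct.rid k R).toLinearMap ∘ₗ
      TensorProduct.map LinearMap.id εR ∘ₗ δR = LinearMap.id
  frobenius_left : TensorProduct.map (LinearMap.mul' k R) LinearMap.id ∘ₗ
      (TensorProduct.assoc k R R R).symm.toLinearMap ∘ₗ
        TensorProduct.map LinearMap.id δR = δR ∘ₗ LinearMap.mul' k R
  frobenius_right : TensorProduct.map LinearMap.id (LinearMap.mul' k R) ∘ₗ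
      (TensorProduct.assoc k R R R).toLinearMap ∘ₗ
        TensorProduct.map δR LinearMap.id = δR ∘ₗ LinearMap.mul' k R

/-- `R` is separable when `μ ∘ δ = id`. -/
def IsSeparableFrobenius : Prop := LinearMap.mul' k R ∘ₗ δR = LinearMap.id

/-- The comultiplication `Δ(a⊗b) = (a ⊗ 1₍₁₎) ⊗ (1₍₂₎ ⊗ b)` on `A = Rᵒᵖ ⊗ R`,
where `δR(1) = 1₍₁₎ ⊗ 1₍₂₎`. -/
def Acomul : (Rᵐᵒᵖ ⊗[k] R) →ₗ[k] (Rᵐᵒᵖ ⊗[k] R) ⊗[k] (Rᵐᵒᵖ ⊗[k] R) :=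
  (TensorProduct.assoc k Rᵐᵒᵖ R (Rᵐᵒᵖ ⊗[k] R)).symm.toLinearMap ∘ₗ
    TensorProduct.map LinearMap.id
      ((TensorProduct.assoc k R Rᵐᵒᵖ R).toLinearMap ∘ₗ
        TensorProduct.mk k (R ⊗[k] Rᵐᵒᵖ) R
          (TensorProduct.map LinearMap.id (opLinearEquiv k).toLinearMap (δR 1)))

/-- The counit `ε̃(a⊗b) = εR(ab)` on `A = Rᵒᵖ ⊗ R`. -/
def Acounit : (Rᵐᵒᵖ ⊗[k] R) →ₗ[k] k :=
  εR ∘ₗ LinearMap.mul' k R ∘ₗ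
    TensorProduct.map (opLinearEquiv k (M := R)).symm.toLinearMap LinearMap.id

end FrobeniusData

set_option maxHeartbeats 4000000 in
set_option synthInstance.maxHeartbeats 400000 in
/-- If `R` is a separable Frobenius algebra over `k`, then `A = R ⊗ R` — with the
multiplication of `Rᵒᵖ ⊗ R` (i.e. `(a⊗b)(a'⊗b') = a'a ⊗ bb'`), unit `1⊗1`,
comultiplication `Δ(a⊗b) = (a ⊗ 1₍₁₎) ⊗ (1₍₂₎ ⊗ b)` and counit `ε̃(a⊗b) = ε(ab)` —
is a weak bialgebra. -/
theorem separable_frobenius_tensor_weak_bialgebra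
    (δR : R →ₗ[k] R ⊗[k] R) (εR : R →ₗ[k] k)
    (hF : IsFrobeniusAlgebra δR εR) (hsep : IsSeparableFrobenius δR) :
    IsWeakBialgebra (A := Rᵐᵒᵖ ⊗[k] R) (Acomul δR) (Acounit εR) := by
  classical
  obtain ⟨S, hS⟩ := TensorProduct.exists_finset (δR 1)
  have h1 : ∀ x : R, δR x = ∑ p ∈ S, (x * p.1) ⊗ₜ[k] p.2 := by
    intro x
    have h := LinearMap.congr_fun hF.frobenius_left (x ⊗ₜ[k] (1 : R))
    simp only [LinearMap.coe_comp, Function.comp_apply, TensorProduct.map_tmul,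
      LinearMap.id_coe, id_eq, LinearMap.mul'_apply, mul_one, LinearEquiv.coe_coe] at h
    rw [hS] at h
    simp only [tmul_sum, map_sum, TensorProduct.assoc_symm_tmul, TensorProduct.map_tmul,
      LinearMap.mul'_apply, LinearMap.id_coe, id_eq] at h
    exact h.symm
  have hδ : ∀ x y : R, δR (x * y) = ∑ p ∈ S, (x * p.1) ⊗ₜ[k] (p.2 * y) := by
    intro x y
    have h := LinearMap.congr_fun hF.frobenius_right (x ⊗ₜ[k] y)
    simp only [LinearMap.coe_comp, Function.comp_apply, TensorProduct.map_tmul,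
      LinearMap.id_coe, id_eq, LinearMap.mul'_apply, LinearEquiv.coe_coe] at h
    rw [h1 x] at h
    simp only [sum_tmul, map_sum, TensorProduct.assoc_tmul, TensorProduct.map_tmul,
      LinearMap.mul'_apply, LinearMap.id_coe, id_eq] at h
    exact h.symm
  -- counit identities
  have hcl : ∀ x : R, ∑ p ∈ S, εR (x * p.1) • p.2 = x := by
    intro x
    have h := LinearMap.congr_fun hF.counit_left x
    rw [LinearMap.comp_apply, LinearMap.comp_apply, h1 x] at h
    simpa [map_sum] using h
  have hcr : ∀ x : R, ∑ p ∈ S, εR (p.2 * x) • p.1 = x := by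
    intro x
    have h := LinearMap.congr_fun hF.counit_right x
    have hx : δR x = ∑ p ∈ S, p.1 ⊗ₜ[k] (p.2 * x) := by
      simpa using hδ 1 x
    rw [LinearMap.comp_apply, LinearMap.comp_apply, hx] at h
    simpa [map_sum] using h
  have hsep' : LinearMap.mul' k R ∘ₗ δR = LinearMap.id := hsep
  have hsep1 : LinearMap.mul' k R (δR 1) = 1 := by
    simpa using LinearMap.congr_fun hsep' 1
  -- idempotency of δ 1
  have hidem : ∑ p ∈ S, ∑ q ∈ S, (q.1 * p.1) ⊗ₜ[k] (p.2 * q.2) = δR 1 := by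
    have h := LinearMap.congr_fun hF.frobenius_right (δR 1)
    simp only [LinearMap.coe_comp, Function.comp_apply, LinearEquiv.coe_coe] at h
    rw [hsep1] at h
    conv_lhs at h => rw [hS]
    simp only [map_sum, TensorProduct.map_tmul, LinearMap.id_coe, id_eq] at h
    simp_rw [h1] at h
    simp only [sum_tmul, map_sum, TensorProduct.assoc_tmul, TensorProduct.map_tmul,
      LinearMap.mul'_apply, LinearMap.id_coe, id_eq] at h
    rw [Finset.sum_comm] at h
    rw [h]
    exact (h1 1).symm
  have hΔ : ∀ (a : Rᵐᵒᵖ) (b : R), Acomul δR (a ⊗ₜ[k] b) =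
      ∑ p ∈ S, (a ⊗ₜ[k] p.1) ⊗ₜ[k] ((op p.2 : Rᵐᵒᵖ) ⊗ₜ[k] b) := by
    intro a b
    simp only [Acomul, LinearMap.coe_comp, Function.comp_apply, LinearEquiv.coe_coe,
      TensorProduct.map_tmul, LinearMap.id_coe, id_eq, TensorProduct.mk_apply]
    rw [hS]
    simp only [map_sum, sum_tmul, TensorProduct.map_tmul, TensorProduct.assoc_tmul,
      LinearMap.id_coe, id_eq, LinearEquiv.coe_coe, MulOpposite.coe_opLinearEquiv,
      MulOpposite.coe_opLinearEquiv_toLinearMap, tmul_sum, TensorProduct.assoc_symm_tmul]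
  have hε : ∀ (a : Rᵐᵒᵖ) (b : R), Acounit εR (a ⊗ₜ[k] b) = εR (a.unop * b) := by
    intro a b
    simp [Acounit, LinearMap.mul'_apply, MulOpposite.coe_opLinearEquiv_symm_toLinearMap]
  have hsw : ∀ (x z u v : Rᵐᵒᵖ ⊗[k] R),
      sweedlerCounit (Acounit εR) x z (u ⊗ₜ[k] v) =
        Acounit εR (x * u) * Acounit εR (v * z) := by
    intro x z u v
    simp [sweedlerCounit, LinearMap.mul'_apply]
  have hkey1 : ∀ u w v : R,
      ∑ p ∈ S, εR (u * p.1) * εR (w * p.2 * v) = εR (w * u * v) := by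
    intro u w v
    conv_rhs => rw [← hcl u]
    rw [Finset.mul_sum, Finset.sum_mul, map_sum]
    refine Finset.sum_congr rfl fun p _ => ?_
    rw [mul_smul_comm, smul_mul_assoc, map_smul, smul_eq_mul]
  have hkey2 : ∀ u w v : R,
      ∑ p ∈ S, εR (p.2 * u) * εR (w * p.1 * v) = εR (w * u * v) := by
    intro u w v
    conv_rhs => rw [← hcr u]
    rw [Finset.mul_sum, Finset.sum_mul, map_sum]
    refine Finset.sum_congr rfl fun p _ => ?_
    rw [mul_smul_comm, smul_mul_assoc, map_smul, smul_eq_mul]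
  constructor
  · -- coassoc
    apply TensorProduct.ext'
    intro a b
    simp only [LinearMap.coe_comp, Function.comp_apply, LinearEquiv.coe_coe]
    rw [hΔ a b]
    simp only [map_sum, TensorProduct.map_tmul, LinearMap.id_coe, id_eq]
    simp_rw [hΔ]
    simp only [sum_tmul, tmul_sum, map_sum, TensorProduct.assoc_tmul]
    exact Finset.sum_comm
  · -- counit_left
    apply TensorProduct.ext'
    intro a b
    simp only [LinearMap.coe_comp, Function.comp_apply, LinearEquiv.coe_coe,
      LinearMap.id_coe, id_eq]
    rw [hΔ a b]
    simp only [map_sum, TensorProduct.map_tmul, LinearMap.id_coe, id_eq, hε,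
      TensorProduct.lid_tmul]
    simp only [smul_tmul', ← sum_tmul]
    congr 1
    have := hcl a.unop
    calc ∑ p ∈ S, εR (a.unop * p.1) • (op p.2 : Rᵐᵒᵖ)
        = ∑ p ∈ S, op (εR (a.unop * p.1) • p.2) := by
          simp [MulOpposite.op_smul]
      _ = op (∑ p ∈ S, εR (a.unop * p.1) • p.2) :=
          (map_sum (opAddEquiv (α := R)) _ _).symm
      _ = a := by rw [hcl a.unop, MulOpposite.op_unop]
  · -- counit_right
    apply TensorProduct.ext'
    intro a b
    simp only [LinearMap.coe_comp, Function.comp_apply, LinearEquiv.coe_coe,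
      LinearMap.id_coe, id_eq]
    rw [hΔ a b]
    simp only [map_sum, TensorProduct.map_tmul, LinearMap.id_coe, id_eq, hε,
      TensorProduct.rid_tmul, MulOpposite.unop_op]
    simp only [← tmul_smul]
    rw [← tmul_sum]
    congr 1
    exact hcr b
  · -- mul_compat
    have key : ∀ (a c : Rᵐᵒᵖ) (b d : R),
        Acomul δR ((a ⊗ₜ[k] b) * (c ⊗ₜ[k] d)) =
          Acomul δR (a ⊗ₜ[k] b) * Acomul δR (c ⊗ₜ[k] d) := by
      intro a c b d
      rw [Algebra.TensorProduct.tmul_mul_tmul, hΔ, hΔ, hΔ]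
      refine Eq.trans ?_ (Finset.sum_mul_sum S S
        (fun p : R × R => (a ⊗ₜ[k] p.1 : Rᵐᵒᵖ ⊗[k] R) ⊗ₜ[k] ((op p.2 : Rᵐᵒᵖ) ⊗ₜ[k] b))
        (fun p : R × R => (c ⊗ₜ[k] p.1 : Rᵐᵒᵖ ⊗[k] R) ⊗ₜ[k] ((op p.2 : Rᵐᵒᵖ) ⊗ₜ[k] d))).symm
      simp only [Algebra.TensorProduct.tmul_mul_tmul]
      have hφ := congrArg (TensorProduct.map (TensorProduct.mk k Rᵐᵒᵖ R (a * c))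
        (((TensorProduct.mk k Rᵐᵒᵖ R).flip (b * d)) ∘ₗ (opLinearEquiv k).toLinearMap)) hidem
      rw [hS] at hφ
      simp only [map_sum, TensorProduct.map_tmul, TensorProduct.mk_apply, LinearMap.coe_comp,
        Function.comp_apply, LinearEquiv.coe_coe, MulOpposite.coe_opLinearEquiv_toLinearMap, MulOpposite.coe_opLinearEquiv,
        LinearMap.flip_apply] at hφ
      simp only [← MulOpposite.op_mul]
      rw [← hφ]
      exact Finset.sum_comm
    intro x y
    induction x using TensorProduct.induction_on with
    | zero => simp
    | tmul a b =>
      induction y using TensorProduct.induction_on with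
      | zero => simp
      | tmul c d => exact key a c b d
      | add u v hu hv => simp only [mul_add, map_add, hu, hv]
    | add u v hu hv => simp only [add_mul, map_add, hu, hv]
  · -- weak_unit₁
    rw [Algebra.TensorProduct.one_def, hΔ]
    simp only [map_sum, TensorProduct.map_tmul, LinearMap.id_coe, id_eq, sum_tmul,
      tmul_sum, TensorProduct.assoc_symm_tmul]
    simp_rw [hΔ, sum_tmul]
    refine Eq.trans ?_ (Finset.sum_mul_sum S S _ _).symm
    simp only [Algebra.TensorProduct.tmul_mul_tmul, one_mul, mul_one]
    exact Finset.sum_comm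
  · -- weak_unit₂
    rw [Algebra.TensorProduct.one_def, hΔ]
    simp only [map_sum, TensorProduct.map_tmul, LinearMap.id_coe, id_eq, sum_tmul,
      tmul_sum, TensorProduct.assoc_symm_tmul]
    simp_rw [hΔ, sum_tmul]
    refine Eq.trans ?_ (Finset.sum_mul_sum S S _ _).symm
    simp only [Algebra.TensorProduct.tmul_mul_tmul, one_mul, mul_one]
  · -- weak_counit₁
    intro x y z
    induction y using TensorProduct.induction_on with
    | zero => simp
    | add y₁ y₂ h₁ h₂ => simp only [mul_add, add_mul, map_add, h₁, h₂]
    | tmul c d =>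
      rw [hΔ, map_sum]
      simp only [hsw]
      induction x using TensorProduct.induction_on with
      | zero => simp
      | add x₁ x₂ h₁ h₂ =>
        simp only [add_mul, map_add, Finset.sum_add_distrib, h₁, h₂]
      | tmul a b =>
        induction z using TensorProduct.induction_on with
        | zero => simp
        | add z₁ z₂ h₁ h₂ =>
          simp only [mul_add, map_add, Finset.sum_add_distrib, h₁, h₂]
        | tmul g h =>
          have h' := hkey1 (c.unop * a.unop * b) g.unop (d * h)
          simp only [Algebra.TensorProduct.tmul_mul_tmul, hε, MulOpposite.unop_mul,
            MulOpposite.unop_op]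
          simp only [mul_assoc] at h' ⊢
          exact h'.symm
  · -- weak_counit₂
    intro x y z
    induction y using TensorProduct.induction_on with
    | zero => simp
    | add y₁ y₂ h₁ h₂ => simp only [mul_add, add_mul, map_add, h₁, h₂]
    | tmul c d =>
      rw [hΔ, map_sum, map_sum]
      simp only [TensorProduct.comm_tmul, hsw]
      induction x using TensorProduct.induction_on with
      | zero => simp
      | add x₁ x₂ h₁ h₂ =>
        simp only [add_mul, map_add, Finset.sum_add_distrib, h₁, h₂]
      | tmul a b =>
        induction z using TensorProduct.induction_on with
        | zero => simp
        | add z₁ z₂ h₁ h₂ =>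
          simp only [mul_add, map_add, Finset.sum_add_distrib, h₁, h₂]
        | tmul g h =>
          have h' := hkey2 (a.unop * b * d) (g.unop * c.unop) h
          simp only [Algebra.TensorProduct.tmul_mul_tmul, hε, MulOpposite.unop_mul,
            MulOpposite.unop_op]
          simp only [mul_assoc] at h' ⊢
          exact h'.symm


end
end

section
/- Let V be a monoidal category and R, S Frobenius monoids in V. Then every morphism f : R → S that is simultaneously a monoid morphism and a comonoid morphism is an isomorphism, with inverse f⁻¹ = (1_R ⊗ σ_S) ∘ (1_R ⊗ f ⊗ 1_S) ∘ (ρ_R ⊗ 1_S), where ρ_R = δ_R∘η_R : I → R⊗R and σ_S = ε_S∘μ_S : S⊗S → I. -/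
/-! The cup `η ≫ δ : 𝟙 ⟶ R ⊗ R` and the cap `μ ≫ ε : R ⊗ R ⟶ 𝟙` of a Frobenius monoid satisfy
the zigzag identity, by the Frobenius law together with the unit and counit laws, so `R` is
self-dual. The proposed inverse of `f` is its mate under these dualities. A monoid morphism
carries the cap of `S` to that of `R` and a comonoid morphism carries the cup of `R` to that of
`S`; sliding `f` along the zigzag then turns `f ≫ f⁻¹` and `f⁻¹ ≫ f` into zigzag identities. -/

open CategoryTheory MonoidalCategory

universe v u

variable {V : Type u} [Category.{v} V] [MonoidalCategory V]

/-- A Frobenius monoid in a monoidal category `V`: an object with a monoid structure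
`(μ, η)` and a comonoid structure `(δ, ε)` satisfying the Frobenius law
`(μ⊗1)(1⊗δ) = δ∘μ = (1⊗μ)(δ⊗1)`. -/
structure FrobeniusMonoidIn (V : Type u) [Category.{v} V] [MonoidalCategory V] where
  X : V
  mul : X ⊗ X ⟶ X
  one : 𝟙_ V ⟶ X
  comul : X ⟶ X ⊗ X
  counit : X ⟶ 𝟙_ V
  mul_assoc : (mul ⊗ₘ 𝟙 X) ≫ mul = (α_ X X X).hom ≫ (𝟙 X ⊗ₘ mul) ≫ mul
  one_mul : (one ⊗ₘ 𝟙 X) ≫ mul = (λ_ X).hom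
  mul_one : (𝟙 X ⊗ₘ one) ≫ mul = (ρ_ X).hom
  comul_assoc : comul ≫ (comul ⊗ₘ 𝟙 X) ≫ (α_ X X X).hom = comul ≫ (𝟙 X ⊗ₘ comul)
  comul_counit_left : comul ≫ (counit ⊗ₘ 𝟙 X) ≫ (λ_ X).hom = 𝟙 X
  comul_counit_right : comul ≫ (𝟙 X ⊗ₘ counit) ≫ (ρ_ X).hom = 𝟙 X
  frobenius_left : (𝟙 X ⊗ₘ comul) ≫ (α_ X X X).inv ≫ (mul ⊗ₘ 𝟙 X) = mul ≫ comul
  frobenius_right : (comul ⊗ₘ 𝟙 X) ≫ (α_ X X X).hom ≫ (𝟙 X ⊗ₘ mul) = mul ≫ comul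

section Snake

variable {X X' Y Y' Z W : V}

/-- For a duality pairing with unit `η` and counit `ε`, `snake η ε = 𝟙` is the zigzag identity. -/
def snake (η : 𝟙_ V ⟶ X ⊗ Y) (ε : Y ⊗ Z ⟶ 𝟙_ V) : Z ⟶ X :=
  (λ_ Z).inv ≫ η ▷ Z ≫ (α_ X Y Z).hom ≫ X ◁ ε ≫ (ρ_ X).hom

variable (η : 𝟙_ V ⟶ X ⊗ Y) (ε : Y ⊗ Z ⟶ 𝟙_ V)

lemma comp_snake (k : W ⟶ Z) : k ≫ snake η ε = snake η (Y ◁ k ≫ ε) := by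
  rw [snake, leftUnitor_inv_naturality_assoc, whisker_exchange_assoc]
  simp [snake]

lemma snake_comp (k : X ⟶ W) : snake η ε ≫ k = snake (η ≫ k ▷ Y) ε := by
  simp only [snake, Category.assoc, ← rightUnitor_naturality, whisker_exchange_assoc]
  simp

lemma snake_comp_whiskerLeft (h : Y ⟶ Y') (ε : Y' ⊗ Z ⟶ 𝟙_ V) :
    snake (η ≫ X ◁ h) ε = snake η (h ▷ Z ≫ ε) := by
  simp [snake]

variable {ηX : 𝟙_ V ⟶ X ⊗ X'} {εX : X' ⊗ X ⟶ 𝟙_ V} {ηY : 𝟙_ V ⟶ Y ⊗ Y'}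
  {εY : Y' ⊗ Y ⟶ 𝟙_ V} {f : X ⟶ Y} {f' : X' ⟶ Y'}

lemma comp_snake_eq_id (hX : snake ηX εX = 𝟙 X) (hε : (f' ⊗ₘ f) ≫ εY = εX) :
    f ≫ snake ηX (f' ▷ Y ≫ εY) = 𝟙 X := by
  rw [comp_snake, whisker_exchange_assoc, ← tensorHom_def_assoc, hε, hX]

lemma snake_comp_eq_id (hY : snake ηY εY = 𝟙 Y) (hη : ηX ≫ (f ⊗ₘ f') = ηY) :
    snake ηX (f' ▷ Y ≫ εY) ≫ f = 𝟙 Y := by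
  rw [snake_comp, ← snake_comp_whiskerLeft, Category.assoc, ← MonoidalCategory.tensorHom_def, hη,
    hY]

end Snake

namespace FrobeniusMonoidIn

variable (R : FrobeniusMonoidIn V)

def cup : 𝟙_ V ⟶ R.X ⊗ R.X := R.one ≫ R.comul

def cap : R.X ⊗ R.X ⟶ 𝟙_ V := R.mul ≫ R.counit

lemma snake_cup_cap : snake R.cup R.cap = 𝟙 R.X := by
  have frobenius : R.comul ▷ R.X ≫ (α_ _ _ _).hom ≫ R.X ◁ R.mul = R.mul ≫ R.comul := by
    simpa using R.frobenius_right
  have one_mul : R.one ▷ R.X ≫ R.mul = (λ_ R.X).hom := by simpa using R.one_mul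
  have comul_counit : R.comul ≫ R.X ◁ R.counit ≫ (ρ_ R.X).hom = 𝟙 R.X := by
    simpa using R.comul_counit_right
  simp only [snake, cup, cap, comp_whiskerRight, whiskerLeft_comp, Category.assoc]
  rw [reassoc_of% frobenius, reassoc_of% one_mul, comul_counit, Iso.inv_hom_id_assoc]

variable {R} {S : FrobeniusMonoidIn V} {f : R.X ⟶ S.X}

lemma cup_comp_tensorHom (hone : R.one ≫ f = S.one)
    (hcomul : f ≫ S.comul = R.comul ≫ (f ⊗ₘ f)) : R.cup ≫ (f ⊗ₘ f) = S.cup := by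
  rw [cup, cup, Category.assoc, ← hcomul, reassoc_of% hone]

lemma tensorHom_comp_cap (hmul : (f ⊗ₘ f) ≫ S.mul = R.mul ≫ f)
    (hcounit : f ≫ S.counit = R.counit) : (f ⊗ₘ f) ≫ S.cap = R.cap := by
  rw [cap, cap, reassoc_of% hmul, hcounit]

end FrobeniusMonoidIn

/-- Every morphism of Frobenius monoids (simultaneously a monoid morphism and a comonoid
morphism) `f : R ⟶ S` is an isomorphism, with inverse
`f⁻¹ = (1_R ⊗ σ_S) ∘ (1_R ⊗ f ⊗ 1_S) ∘ (ρ_R ⊗ 1_S)`, where `ρ_R = δ_R∘η_R` and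
`σ_S = ε_S∘μ_S`. -/
theorem frobenius_morphism_isIso (R S : FrobeniusMonoidIn V) (f : R.X ⟶ S.X)
    (hmul : (f ⊗ₘ f) ≫ S.mul = R.mul ≫ f)
    (hone : R.one ≫ f = S.one)
    (hcomul : f ≫ S.comul = R.comul ≫ (f ⊗ₘ f))
    (hcounit : f ≫ S.counit = R.counit) :
    f ≫ ((λ_ S.X).inv ≫ ((R.one ≫ R.comul) ⊗ₘ 𝟙 S.X) ≫ (α_ R.X R.X S.X).hom ≫
        (𝟙 R.X ⊗ₘ (f ⊗ₘ 𝟙 S.X)) ≫ (𝟙 R.X ⊗ₘ (S.mul ≫ S.counit)) ≫ (ρ_ R.X).hom) = 𝟙 R.X ∧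
    ((λ_ S.X).inv ≫ ((R.one ≫ R.comul) ⊗ₘ 𝟙 S.X) ≫ (α_ R.X R.X S.X).hom ≫
        (𝟙 R.X ⊗ₘ (f ⊗ₘ 𝟙 S.X)) ≫ (𝟙 R.X ⊗ₘ (S.mul ≫ S.counit)) ≫ (ρ_ R.X).hom) ≫ f =
      𝟙 S.X ∧
    IsIso f := by
  have inv_eq_snake : (λ_ S.X).inv ≫ ((R.one ≫ R.comul) ⊗ₘ 𝟙 S.X) ≫ (α_ R.X R.X S.X).hom ≫
      (𝟙 R.X ⊗ₘ (f ⊗ₘ 𝟙 S.X)) ≫ (𝟙 R.X ⊗ₘ (S.mul ≫ S.counit)) ≫ (ρ_ R.X).hom =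
      snake R.cup (f ▷ S.X ≫ S.cap) := by
    simp [snake, FrobeniusMonoidIn.cup, FrobeniusMonoidIn.cap]
  have hom_inv_id : f ≫ snake R.cup (f ▷ S.X ≫ S.cap) = 𝟙 R.X :=
    comp_snake_eq_id R.snake_cup_cap (FrobeniusMonoidIn.tensorHom_comp_cap hmul hcounit)
  have inv_hom_id : snake R.cup (f ▷ S.X ≫ S.cap) ≫ f = 𝟙 S.X :=
    snake_comp_eq_id S.snake_cup_cap (FrobeniusMonoidIn.cup_comp_tensorHom hone hcomul)
  rw [inv_eq_snake]
  exact ⟨hom_inv_id, inv_hom_id, ⟨_, hom_inv_id, inv_hom_id⟩⟩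
end
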